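/- arXiv:2104.02002 — 10 statements merged into one kernel-verified Lean document; each statement's English description precedes it below -/
import Mathlib

section
/- For every real number c > 2 there exists n₀ ∈ ℕ such that for all integers n ≥ n₀ the following holds with N = n + ⌊c·n/log₂ n⌋: for every partition of the Boolean lattice Q_N into families B and R, either B contains an induced copy of Q_2 or R contains an induced copy of Q_n. Equivalently, the induced poset Ramsey number satisfies R(Q_2, Q_n) ≤ n + c·n/log₂ n for all sufficiently large n. -/
/-!
Write `[N] = X ⊔ Y` with `|X| = n`, `|Y| = α`. An ordering `τ` of `Y` gives a maximal chain
`Y_0 ⊂ Y_1 ⊂ ⋯ ⊂ Y_α` of `Q_Y` (`Y_i` = the `i` elements of lowest rank). A blue ladder below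
`S ⊆ X` along `τ` is a sequence `T_0 ⊆ T_1 ⊆ ⋯ ⊆ S` with every `T_j ∪ Y_j` blue. If for some `τ`
no ladder reaches level `α`, send `S` to `S ∪ Y_r`, where `r` is the height of the tallest ladder
below `S`: this set is red, and `S ↦ S ∪ Y_r` is an induced copy of `Q_X`. Otherwise, if two
orderings had full ladders with the same `T_0` and `T_α`, then at each level `i` the blue sets
`T_i ∪ Y_i` and `T'_i ∪ Y'_i` lie between the common blue sets `T_0` and `T_α ∪ Y`, so without a
blue `Q_2` they are comparable, which forces `Y_i = Y'_i`; hence `α! ≤ 4^n`.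
It remains that `α! ≥ (α/e)^α > 4^n` for `α = ⌊c n / log₂ n⌋` and large `n` once `c > 2`.
-/

/-- A family `F` of subsets of `[N]` (modeled as `Finset (Fin N)`) contains an induced
copy of the Boolean lattice `Q_m`: there is an injection `φ` from `Q_m` into `F` such
that `φ A ⊆ φ B` if and only if `A ⊆ B`. -/
def ContainsInducedCopy (m N : ℕ) (F : Set (Finset (Fin N))) : Prop :=
  ∃ φ : Finset (Fin m) → Finset (Fin N),
    Function.Injective φ ∧ (∀ A, φ A ∈ F) ∧
    ∀ A B : Finset (Fin m), A ⊆ B ↔ φ A ⊆ φ B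

open Finset Filter Real

def HasInducedCopy (α : Type*) {β : Type*} (F : Set (Finset β)) : Prop :=
  ∃ φ : Finset α ↪o Finset β, ∀ A, φ A ∈ F

theorem containsInducedCopy_iff_hasInducedCopy {m N : ℕ} {F : Set (Finset (Fin N))} :
    ContainsInducedCopy m N F ↔ HasInducedCopy (Fin m) F := by
  constructor
  · rintro ⟨φ, -, hφF, hφ⟩
    exact ⟨OrderEmbedding.ofMapLEIff φ fun A B => (hφ A B).symm, hφF⟩
  · rintro ⟨φ, hφF⟩
    exact ⟨φ, φ.injective, hφF, fun A B => φ.le_iff_le.symm⟩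

namespace HasInducedCopy

variable {α β γ : Type*} {F G : Set (Finset β)}

theorem mono (h : HasInducedCopy α F) (hFG : F ⊆ G) : HasInducedCopy α G :=
  let ⟨φ, hφ⟩ := h
  ⟨φ, fun A => hFG (hφ A)⟩

theorem of_preimage_map (e : β ↪ γ) {F : Set (Finset γ)}
    (h : HasInducedCopy α (Finset.map e ⁻¹' F)) : HasInducedCopy α F :=
  let ⟨φ, hφ⟩ := h
  ⟨φ.trans (mapEmbedding e), hφ⟩

end HasInducedCopy

theorem hasInducedCopy_fin_two_of_incomparable {β : Type*} {F : Set (Finset β)}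
    {a v w d : Finset β} (ha : a ∈ F) (hv : v ∈ F) (hw : w ∈ F) (hd : d ∈ F)
    (hav : a ⊆ v) (haw : a ⊆ w) (hvd : v ⊆ d) (hwd : w ⊆ d) (hvw : ¬ v ⊆ w) (hwv : ¬ w ⊆ v) :
    HasInducedCopy (Fin 2) F := by
  have had : a ⊆ d := hav.trans hvd
  have hdv : ¬ d ⊆ v := fun h => hwv (hwd.trans h)
  have hdw : ¬ d ⊆ w := fun h => hvw (hvd.trans h)
  have hva : ¬ v ⊆ a := fun h => hvw (h.trans haw)
  have hwa : ¬ w ⊆ a := fun h => hwv (h.trans hav)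
  have hda : ¬ d ⊆ a := fun h => hdv (h.trans hav)
  let φ (T : Finset (Fin 2)) : Finset β :=
    if 0 ∈ T then (if 1 ∈ T then d else v) else (if 1 ∈ T then w else a)
  refine ⟨OrderEmbedding.ofMapLEIff φ fun A B => ?_, fun A => ?_⟩
  · simp only [φ, subset_iff, Fin.forall_fin_two]
    by_cases h0A : (0 : Fin 2) ∈ A <;> by_cases h1A : (1 : Fin 2) ∈ A <;>
      by_cases h0B : (0 : Fin 2) ∈ B <;> by_cases h1B : (1 : Fin 2) ∈ B <;>
      simp [h0A, h1A, h0B, h1B, ← subset_iff, hav, haw, hvd, hwd, had, hvw, hwv, hdv, hdw,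
        hva, hwa, hda]
  · simp only [OrderEmbedding.coe_ofMapLEIff, φ]
    split_ifs <;> assumption

section Chains

variable {X : Type*} {α : ℕ}

def rankBelow (τ : Equiv.Perm (Fin α)) (i : ℕ) : Finset (Fin α) := {y | (τ y : ℕ) < i}

theorem rankBelow_mono (τ : Equiv.Perm (Fin α)) : Monotone (rankBelow τ) :=
  fun _ _ hij _ => by simp only [rankBelow, mem_filter, mem_univ, true_and]; omega

@[simp] theorem rankBelow_zero (τ : Equiv.Perm (Fin α)) : rankBelow τ 0 = ∅ := by
  simp [rankBelow]

@[simp] theorem rankBelow_self (τ : Equiv.Perm (Fin α)) : rankBelow τ α = univ := by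
  simp [rankBelow]

theorem card_rankBelow_eq (τ τ' : Equiv.Perm (Fin α)) (i : ℕ) :
    #(rankBelow τ i) = #(rankBelow τ' i) :=
  card_equiv (τ.trans τ'.symm) (by simp [rankBelow])

theorem eq_of_rankBelow_eq {τ τ' : Equiv.Perm (Fin α)}
    (h : ∀ i ≤ α, rankBelow τ i = rankBelow τ' i) : τ = τ' := by
  ext y
  have h₁ := congrArg (y ∈ ·) (h (τ y + 1) (τ y).is_lt)
  have h₂ := congrArg (y ∈ ·) (h (τ' y + 1) (τ' y).is_lt)
  simp only [rankBelow, mem_filter, mem_univ, true_and, eq_iff_iff] at h₁ h₂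
  omega

/-- The set `T ∪ Y_i`, with `X ⊔ Y` realised as `X ⊕ Fin α`. -/
def chainLevel (τ : Equiv.Perm (Fin α)) (T : Finset X) (i : ℕ) : Finset (X ⊕ Fin α) :=
  T.disjSum (rankBelow τ i)

theorem chainLevel_subset_chainLevel_iff {τ τ' : Equiv.Perm (Fin α)} {T T' : Finset X}
    {i i' : ℕ} :
    chainLevel τ T i ⊆ chainLevel τ' T' i' ↔ T ⊆ T' ∧ rankBelow τ i ⊆ rankBelow τ' i' := by
  simp [chainLevel, disjSum_subset]

theorem chainLevel_mono {τ : Equiv.Perm (Fin α)} {T T' : Finset X} {i i' : ℕ}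
    (hT : T ⊆ T') (hi : i ≤ i') : chainLevel τ T i ⊆ chainLevel τ T' i' :=
  disjSum_mono hT (rankBelow_mono τ hi)

end Chains

section Ladders

variable {X : Type*} {α : ℕ} {B : Set (Finset (X ⊕ Fin α))}
  {τ : Equiv.Perm (Fin α)} {i : ℕ} {S S' : Finset X}

/-- `u j` is `T_j`; a ladder of height `i` has blue levels `0, …, i - 1`. -/
def HasLadder (B : Set (Finset (X ⊕ Fin α))) (τ : Equiv.Perm (Fin α)) (i : ℕ)
    (S : Finset X) : Prop :=
  ∃ u : ℕ → Finset X, Monotone u ∧ (∀ j, u j ⊆ S) ∧ ∀ j < i, chainLevel τ (u j) j ∈ B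

theorem hasLadder_zero : HasLadder B τ 0 S :=
  ⟨fun _ => ∅, monotone_const, fun _ => empty_subset S, fun _ h => absurd h (Nat.not_lt_zero _)⟩

theorem HasLadder.mono (h : HasLadder B τ i S) (hS : S ⊆ S') : HasLadder B τ i S' :=
  let ⟨u, hu, huS, huB⟩ := h
  ⟨u, hu, fun j => (huS j).trans hS, huB⟩

theorem HasLadder.succ (h : HasLadder B τ i S) (hS : chainLevel τ S i ∈ B) :
    HasLadder B τ (i + 1) S := by
  obtain ⟨u, hu, huS, huB⟩ := h
  refine ⟨fun j => if j < i then u j else S, fun j k hjk => ?_, fun j => ?_, fun j hj => ?_⟩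
  · dsimp only
    split_ifs with hj hk hk
    exacts [hu hjk, huS j, by omega, le_rfl]
  · dsimp only
    split_ifs
    exacts [huS j, subset_rfl]
  · dsimp only
    split_ifs with hji
    · exact huB j hji
    · rwa [show j = i by omega]

theorem hasInducedCopy_compl_of_not_hasLadder [Fintype X] (h : ¬ HasLadder B τ (α + 1) univ) :
    HasInducedCopy X Bᶜ := by
  classical
  let r (S : Finset X) : ℕ := Nat.findGreatest (fun i => HasLadder B τ i S) (α + 1)
  have hr_mono : Monotone r := fun S S' hS =>
    Nat.findGreatest_mono_left (fun i hi => hi.mono hS) _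
  have hr_ladder (S : Finset X) : HasLadder B τ (r S) S :=
    Nat.findGreatest_spec (P := fun i => HasLadder B τ i S) (Nat.zero_le _) hasLadder_zero
  have hr_lt (S : Finset X) : r S < α + 1 :=
    (Nat.findGreatest_le _).lt_of_ne fun heq => h <| by
      simpa only [r, heq] using (hr_ladder S).mono (subset_univ S)
  -- `chainLevel τ S (r S)` is red: were it blue, the tallest ladder below `S` would grow.
  refine ⟨OrderEmbedding.ofMapLEIff (fun S => chainLevel τ S (r S)) fun S S' =>
    ⟨fun hSS' => (chainLevel_subset_chainLevel_iff.1 hSS').1,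
      fun hSS' => chainLevel_mono hSS' (hr_mono hSS')⟩, fun S hS => ?_⟩
  exact Nat.findGreatest_is_greatest (Nat.lt_succ_self _) (hr_lt S) ((hr_ladder S).succ hS)

theorem rankBelow_eq_of_ladders (hB : ¬ HasInducedCopy (Fin 2) B) {τ τ' : Equiv.Perm (Fin α)}
    {u u' : ℕ → Finset X} (hu : Monotone u) (hu' : Monotone u')
    (huB : ∀ j < α + 1, chainLevel τ (u j) j ∈ B) (hu'B : ∀ j < α + 1, chainLevel τ' (u' j) j ∈ B)
    (hbot : u 0 = u' 0) (htop : u α = u' α) (hi : i ≤ α) :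
    rankBelow τ i = rankBelow τ' i := by
  have hbot' : chainLevel τ (u 0) 0 = chainLevel τ' (u' 0) 0 := by simp [chainLevel, hbot]
  have htop' : chainLevel τ (u α) α = chainLevel τ' (u' α) α := by simp [chainLevel, htop]
  have hcomp : chainLevel τ (u i) i ⊆ chainLevel τ' (u' i) i ∨
      chainLevel τ' (u' i) i ⊆ chainLevel τ (u i) i := by
    by_contra! hc
    exact hB (hasInducedCopy_fin_two_of_incomparable (huB 0 (by omega)) (huB i (by omega))
      (hu'B i (by omega)) (huB α (by omega)) (chainLevel_mono (hu (Nat.zero_le i)) (Nat.zero_le i))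
      (hbot' ▸ chainLevel_mono (hu' (Nat.zero_le i)) (Nat.zero_le i)) (chainLevel_mono (hu hi) hi)
      (htop' ▸ chainLevel_mono (hu' hi) hi) hc.1 hc.2)
  rcases hcomp with h | h
  · exact eq_of_subset_of_card_le (chainLevel_subset_chainLevel_iff.1 h).2
      (card_rankBelow_eq τ' τ i).le
  · exact (eq_of_subset_of_card_le (chainLevel_subset_chainLevel_iff.1 h).2
      (card_rankBelow_eq τ τ' i).le).symm

theorem factorial_le_four_pow_of_forall_hasLadder [Fintype X] (hB : ¬ HasInducedCopy (Fin 2) B)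
    (h : ∀ τ, HasLadder B τ (α + 1) univ) : α.factorial ≤ 4 ^ Fintype.card X := by
  choose u hu _ huB using h
  have hinj : Function.Injective fun τ => (u τ 0, u τ α) := fun τ τ' hττ' =>
    eq_of_rankBelow_eq fun i hi => rankBelow_eq_of_ladders hB (hu τ) (hu τ') (huB τ) (huB τ')
      (Prod.ext_iff.1 hττ').1 (Prod.ext_iff.1 hττ').2 hi
  have := Fintype.card_le_of_injective _ hinj
  rwa [Fintype.card_perm, Fintype.card_prod, Fintype.card_finset, Fintype.card_fin, ← mul_pow]
    at this

theorem hasInducedCopy_fin_two_or_compl [Fintype X] (hα : 4 ^ Fintype.card X < α.factorial)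
    (B : Set (Finset (X ⊕ Fin α))) : HasInducedCopy (Fin 2) B ∨ HasInducedCopy X Bᶜ := by
  by_cases hB : HasInducedCopy (Fin 2) B
  · exact .inl hB
  obtain ⟨τ, hτ⟩ : ∃ τ, ¬ HasLadder B τ (α + 1) univ := by
    by_contra! h
    exact (factorial_le_four_pow_of_forall_hasLadder hB h).not_gt hα
  exact .inr (hasInducedCopy_compl_of_not_hasLadder hτ)

end Ladders

theorem exp_mul_log_sub_one_le_factorial (k : ℕ) : exp (k * (log k - 1)) ≤ k.factorial := by
  rcases Nat.eq_zero_or_pos k with rfl | hk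
  · simp
  have hk' : (0 : ℝ) < k := Nat.cast_pos.2 hk
  calc exp (k * (log k - 1)) = (k : ℝ) ^ k / exp k := by
        rw [mul_sub, mul_one, exp_sub, ← log_pow, exp_log (pow_pos hk' k)]
    _ ≤ k.factorial := by
        rw [div_le_iff₀ (exp_pos _), ← div_le_iff₀' (Nat.cast_pos.2 k.factorial_pos)]
        exact pow_div_factorial_le_exp _ hk'.le k

theorem pow_lt_factorial_of_mul_log_lt {b : ℝ} (hb : 0 < b) {n k : ℕ}
    (h : n * log b < k * (log k - 1)) : b ^ n < k.factorial :=
  calc b ^ n = exp (n * log b) := by rw [← log_pow, exp_log (pow_pos hb n)]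
    _ < exp (k * (log k - 1)) := exp_lt_exp.2 h
    _ ≤ k.factorial := exp_mul_log_sub_one_le_factorial k

/-- With `L = log₂ x` and `A = c x / L ≤ ⌊A⌋₊ + 1`: `A log x = c x log 2`, and the losses
`A (log L + 1) ≤ 2 δ c x` and `log x` eat only `3/4` of the slack `(c - 2) x log 2`. -/
theorem mul_log_four_lt_floor_mul_log_sub_one {c δ x : ℝ} (hc : 2 < c)
    (hδc : δ * c = (c - 2) * log 2 / 4) (hx : 1 < x) (hL1 : 1 ≤ logb 2 x)
    (hδL : 1 ≤ δ * logb 2 x) (hlogL : log (logb 2 x) ≤ δ * logb 2 x)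
    (hlogx : log x ≤ (c - 2) / 8 * log 2 * x) :
    x * log 4 < ⌊c * x / logb 2 x⌋₊ * (log ⌊c * x / logb 2 x⌋₊ - 1) := by
  set L := logb 2 x
  set A := c * x / L
  have hℓ : 0 < log 2 := log_pos one_lt_two
  have hL0 : 0 < L := by linarith
  have hlogx_eq : log x = L * log 2 := by simp only [L, logb, div_mul_cancel₀ _ hℓ.ne']
  have hAL : A * L = c * x := div_mul_cancel₀ _ hL0.ne'
  have hA : 0 ≤ A := by positivity
  have hxL : x / L ≤ A - 1 := by
    have hLx : L ≤ (c - 2) / 8 * x := le_of_mul_le_mul_right (by linarith) hℓ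
    rw [div_le_iff₀ hL0, sub_mul, hAL]
    nlinarith
  have ha : A - 1 < ⌊A⌋₊ := Nat.sub_one_lt_floor A
  have hloga : log x - log L ≤ log ⌊A⌋₊ := by
    rw [← log_div (by positivity) hL0.ne']
    exact log_le_log (by positivity) (by linarith)
  have h2δ : 2 * δ ≤ log 2 := le_of_mul_le_mul_right (by nlinarith) (by linarith : 0 < c)
  have hgap : 0 ≤ log x - log L - 1 := by nlinarith
  have hmain : c * x * log 2 - 2 * (δ * c) * x - log x ≤ (A - 1) * (log x - log L - 1) := by
    have : A * (log L + 1) ≤ A * (2 * δ * L) := mul_le_mul_of_nonneg_left (by linarith) hA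
    have hAlog : A * log x = c * x * log 2 := by rw [hlogx_eq, ← mul_assoc, hAL]
    nlinarith [log_nonneg hL1]
  calc x * log 4 = 2 * x * log 2 := by
        rw [show (4 : ℝ) = 2 ^ 2 by norm_num, log_pow]; push_cast; ring
    _ < c * x * log 2 - 2 * (δ * c) * x - log x := by
        rw [hδc]; nlinarith [mul_pos (mul_pos (by linarith : 0 < c - 2) (by linarith : 0 < x)) hℓ]
    _ ≤ (A - 1) * (log x - log L - 1) := hmain
    _ ≤ ⌊A⌋₊ * (log ⌊A⌋₊ - 1) := mul_le_mul ha.le (by linarith) hgap (Nat.cast_nonneg _)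

theorem eventually_four_pow_lt_factorial_floor {c : ℝ} (hc : 2 < c) :
    ∀ᶠ n : ℕ in atTop, 4 ^ n < (⌊c * n / logb 2 n⌋₊).factorial := by
  have hc2 : 0 < c - 2 := by linarith
  have hℓ : 0 < log 2 := log_pos one_lt_two
  set δ := (c - 2) * log 2 / (4 * c)
  have hδ : 0 < δ := by positivity
  have hδc : δ * c = (c - 2) * log 2 / 4 := by simp only [δ]; field_simp
  have hL : Tendsto (fun n : ℕ => logb 2 n) atTop atTop :=
    (tendsto_logb_atTop one_lt_two).comp tendsto_natCast_atTop_atTop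
  filter_upwards [eventually_gt_atTop 1, hL.eventually_ge_atTop 1, hL.eventually_ge_atTop δ⁻¹,
    hL.eventually (isLittleO_log_id_atTop.bound hδ),
    tendsto_natCast_atTop_atTop.eventually (isLittleO_log_id_atTop.bound (by positivity :
      0 < (c - 2) / 8 * log 2))] with n hn hL1 hLδ hlogL hlogx
  have hx : (1 : ℝ) < n := Nat.one_lt_cast.2 hn
  rw [id, norm_of_nonneg (log_nonneg hL1), norm_of_nonneg (by linarith)] at hlogL
  rw [id, norm_of_nonneg (log_nonneg hx.le), norm_of_nonneg (by linarith)] at hlogx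
  have hδL : 1 ≤ δ * logb 2 n := by rwa [inv_le_iff_one_le_mul₀' hδ] at hLδ
  exact_mod_cast pow_lt_factorial_of_mul_log_lt four_pos
    (mul_log_four_lt_floor_mul_log_sub_one hc hδc hx hL1 hδL hlogL hlogx)

/-- For every real `c > 2` there is `n₀` such that for all `n ≥ n₀`, with
`N = n + ⌊c·n/log₂ n⌋`, every partition of `Q_N` into families `B` and `R` yields a
blue induced copy of `Q_2` or a red induced copy of `Q_n`; i.e.
`R(Q_2, Q_n) ≤ n + c·n/log₂ n` for sufficiently large `n`. -/
theorem induced_ramsey_Q2_Qn_upper_asymptotic :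
    ∀ c : ℝ, 2 < c → ∃ n₀ : ℕ, ∀ n : ℕ, n₀ ≤ n →
      ∀ B R : Set (Finset (Fin (n + ⌊c * n / Real.logb 2 n⌋₊))),
        B ∪ R = Set.univ → B ∩ R = ∅ →
        ContainsInducedCopy 2 (n + ⌊c * n / Real.logb 2 n⌋₊) B ∨
        ContainsInducedCopy n (n + ⌊c * n / Real.logb 2 n⌋₊) R := by
  intro c hc
  obtain ⟨n₀, hn₀⟩ := eventually_atTop.1 (eventually_four_pow_lt_factorial_floor hc)
  refine ⟨n₀, fun n hn B R hBR _ => ?_⟩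
  let e : Fin n ⊕ Fin ⌊c * n / logb 2 n⌋₊ ↪ Fin (n + ⌊c * n / logb 2 n⌋₊) :=
    finSumFinEquiv.toEmbedding
  have hR : (Finset.map e ⁻¹' B)ᶜ ⊆ Finset.map e ⁻¹' R := fun S hS =>
    (Set.eq_univ_iff_forall.1 hBR (S.map e)).resolve_left hS
  simp only [containsInducedCopy_iff_hasInducedCopy]
  refine (hasInducedCopy_fin_two_or_compl (by simpa using hn₀ n hn) (Finset.map e ⁻¹' B)).imp
    (·.of_preimage_map e) fun h => (h.mono hR).of_preimage_map e
end

section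
/- For every integer n ≥ 2 the following holds with N = n + ⌊6.14·n/log₂ n⌋: for every partition of the Boolean lattice Q_N into families B and R, either B contains an induced copy of Q_2 or R contains an induced copy of Q_n. Equivalently, R(Q_2, Q_n) ≤ n + 6.14·n/log₂ n for all n ≥ 2. -/
/-!
Write `k = ⌊6.14 n / log₂ n⌋` and split `[n + k] = [n] ⊔ [k]`. An ordering `σ` of `[k]` gives
the chain of its initial segments `T₀ ⊂ T₁ ⊂ ⋯ ⊂ T_k`; a ladder for `σ` is a chain
`Z₀ ⊆ ⋯ ⊆ Z_k` in `Q_n` whose rungs `Z_j ∪ T_j` are all blue.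

If some `σ` has no ladder, map `X ⊆ [n]` to `X ∪ T_{h(X)}`, where `h(X)` is the largest number
of rungs of a partial ladder lying below `X`. The map is order-preserving and reflecting in `X`,
and its values are red, since a blue value would extend the partial ladder by one rung.

If every `σ` has a ladder, then because `k! > 4^n` two orderings `σ ≠ τ` have ladders with the
same `Z₀` and `Z_k`. At a level `j` where `T_j^σ ≠ T_j^τ`, these two sets of size `j` are
incomparable, and `Z₀ ∪ ∅`, `Z_j^σ ∪ T_j^σ`, `Z_j^τ ∪ T_j^τ`, `Z_k ∪ [k]` form a blue induced
`Q_2`. The estimate `k! > 4^n` follows from Stirling's bound `log k! ≥ k (log k - 1)` and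
`k ≥ 3n / ln n`.
-/

open Finset Real

namespace InducedRamsey

theorem containsInducedCopy_of_subset_iff {m N : ℕ} {F : Set (Finset (Fin N))}
    (φ : Finset (Fin m) → Finset (Fin N)) (hF : ∀ A, φ A ∈ F)
    (hφ : ∀ A B, A ⊆ B ↔ φ A ⊆ φ B) : ContainsInducedCopy m N F :=
  ⟨φ, fun A B h => subset_antisymm ((hφ A B).2 h.le) ((hφ B A).2 h.ge), hF, hφ⟩

theorem ContainsInducedCopy.mono {m N : ℕ} {F G : Set (Finset (Fin N))} (hFG : F ⊆ G) :
    ContainsInducedCopy m N F → ContainsInducedCopy m N G :=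
  fun ⟨φ, hinj, hF, hφ⟩ => ⟨φ, hinj, fun A => hFG (hF A), hφ⟩

theorem containsInducedCopy_two_of_diamond {N : ℕ} {F : Set (Finset (Fin N))}
    {W₀ W₁ W₂ W₃ : Finset (Fin N)} (h₀ : W₀ ∈ F) (h₁ : W₁ ∈ F) (h₂ : W₂ ∈ F) (h₃ : W₃ ∈ F)
    (h₀₁ : W₀ ⊆ W₁) (h₀₂ : W₀ ⊆ W₂) (h₁₃ : W₁ ⊆ W₃) (h₂₃ : W₂ ⊆ W₃)
    (h₁₂ : ¬W₁ ⊆ W₂) (h₂₁ : ¬W₂ ⊆ W₁) : ContainsInducedCopy 2 N F := by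
  have h₀₃ : W₀ ⊆ W₃ := h₀₁.trans h₁₃
  have h₁₀ : ¬W₁ ⊆ W₀ := fun h => h₁₂ (h.trans h₀₂)
  have h₂₀ : ¬W₂ ⊆ W₀ := fun h => h₂₁ (h.trans h₀₁)
  have h₃₀ : ¬W₃ ⊆ W₀ := fun h => h₁₀ (h₁₃.trans h)
  have h₃₁ : ¬W₃ ⊆ W₁ := fun h => h₂₁ (h₂₃.trans h)
  have h₃₂ : ¬W₃ ⊆ W₂ := fun h => h₁₂ (h₁₃.trans h)
  refine containsInducedCopy_of_subset_iff
    (fun A => if 0 ∈ A then (if 1 ∈ A then W₃ else W₁) else (if 1 ∈ A then W₂ else W₀))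
    (fun A => by split_ifs <;> assumption) fun A B => ?_
  fin_cases A <;> fin_cases B <;> simp [*] <;> decide

section Coordinates

variable {n k : ℕ}

/-- `X ∪ T` for `X ⊆ [n]` and `T ⊆ [k]` placed on the last `k` coordinates of `[n + k]`. -/
def glue (X : Finset (Fin n)) (T : Finset (Fin k)) : Finset (Fin (n + k)) :=
  (X.disjSum T).map finSumFinEquiv.toEmbedding

theorem glue_subset_glue_iff {X X' : Finset (Fin n)} {T T' : Finset (Fin k)} :
    glue X T ⊆ glue X' T' ↔ X ⊆ X' ∧ T ⊆ T' := by
  simp [glue, disjSum_subset]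

def prefixSet (σ : Equiv.Perm (Fin k)) (j : ℕ) : Finset (Fin k) :=
  ({i : Fin k | (i : ℕ) < j} : Finset (Fin k)).map σ.toEmbedding

variable {σ τ : Equiv.Perm (Fin k)} {j : ℕ}

theorem mem_prefixSet {t : Fin k} : t ∈ prefixSet σ j ↔ (σ.symm t : ℕ) < j := by
  simp [prefixSet, mem_map_equiv]

theorem prefixSet_mono (σ : Equiv.Perm (Fin k)) : Monotone (prefixSet σ) :=
  fun _ _ hjj' _ ht => mem_prefixSet.2 ((mem_prefixSet.1 ht).trans_le hjj')

@[simp] theorem prefixSet_zero (σ : Equiv.Perm (Fin k)) : prefixSet σ 0 = ∅ := by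
  ext; simp [mem_prefixSet]

@[simp] theorem prefixSet_self (σ : Equiv.Perm (Fin k)) : prefixSet σ k = univ := by
  ext; simp [mem_prefixSet]

theorem card_prefixSet (hj : j ≤ k) : #(prefixSet σ j) = j := by
  simp [prefixSet, Fin.card_filter_val_lt, hj]

theorem prefixSet_subset_iff_eq (hj : j ≤ k) :
    prefixSet σ j ⊆ prefixSet τ j ↔ prefixSet σ j = prefixSet τ j :=
  ⟨fun h => eq_of_subset_of_card_le h (by rw [card_prefixSet hj, card_prefixSet hj]),
    fun h => h.subset⟩

theorem exists_prefixSet_ne (hστ : σ ≠ τ) : ∃ j ≤ k, prefixSet σ j ≠ prefixSet τ j := by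
  by_contra! h
  refine hστ (Equiv.ext fun i => τ.symm.injective (Fin.ext ?_))
  have hlt : ((τ.symm (σ i) : Fin k) : ℕ) < i + 1 := by
    rw [← mem_prefixSet, ← h (i + 1) i.is_lt]
    simp [mem_prefixSet]
  have hge : ¬((τ.symm (σ i) : Fin k) : ℕ) < i := by
    rw [← mem_prefixSet, ← h i i.is_lt.le]
    simp [mem_prefixSet]
  simp only [Equiv.symm_apply_apply]
  omega

end Coordinates

section Ladders

variable {n k : ℕ} (Blue : Set (Finset (Fin (n + k)))) (σ : Equiv.Perm (Fin k))

def IsLadder (r : ℕ) (Z : ℕ → Finset (Fin n)) : Prop :=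
  Monotone Z ∧ ∀ j < r, glue (Z j) (prefixSet σ j) ∈ Blue

/-- `Z r`, the value after the last rung, bounds the partial ladder. -/
def HasLadderUnder (X : Finset (Fin n)) (r : ℕ) : Prop :=
  ∃ Z, IsLadder Blue σ r Z ∧ Z r ⊆ X

variable {Blue σ}

theorem hasLadderUnder_zero (X : Finset (Fin n)) : HasLadderUnder Blue σ X 0 :=
  ⟨fun _ => ∅, ⟨monotone_const, by simp⟩, empty_subset X⟩

theorem HasLadderUnder.mono {X Y : Finset (Fin n)} {r : ℕ} (hXY : X ⊆ Y)
    (h : HasLadderUnder Blue σ X r) : HasLadderUnder Blue σ Y r :=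
  let ⟨Z, hZ, hZX⟩ := h
  ⟨Z, hZ, hZX.trans hXY⟩

theorem HasLadderUnder.succ {X : Finset (Fin n)} {r : ℕ} (h : HasLadderUnder Blue σ X r)
    (hX : glue X (prefixSet σ r) ∈ Blue) : HasLadderUnder Blue σ X (r + 1) := by
  classical
  obtain ⟨Z, ⟨hZ, hblue⟩, hZX⟩ := h
  refine ⟨fun j => if j < r then Z j else X, ⟨fun i j hij => ?_, fun j hj => ?_⟩, by simp⟩
  · dsimp only
    split_ifs with hi hj
    · exact hZ hij
    · exact (hZ (by omega)).trans hZX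
    · omega
    · exact subset_rfl
  · dsimp only
    split_ifs with hjr
    · exact hblue j hjr
    · rwa [show j = r by omega]

theorem containsInducedCopy_compl_of_forall_not_isLadder
    (hσ : ∀ Z, ¬IsLadder Blue σ (k + 1) Z) : ContainsInducedCopy n (n + k) Blueᶜ := by
  classical
  let height (X : Finset (Fin n)) : ℕ := Nat.findGreatest (HasLadderUnder Blue σ X) k
  have hheight (X) : HasLadderUnder Blue σ X (height X) :=
    Nat.findGreatest_spec (Nat.zero_le k) (hasLadderUnder_zero X)
  -- a blue image of `X` would carry the ladder under `X` one rung higher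
  have hred (X) : glue X (prefixSet σ (height X)) ∉ Blue := by
    intro hX
    have hsucc := (hheight X).succ hX
    obtain hlt | heq : height X < k ∨ height X = k := (Nat.findGreatest_le k).lt_or_eq
    · exact Nat.findGreatest_is_greatest (Nat.lt_succ_self _) hlt hsucc
    · obtain ⟨Z, hZ, -⟩ := hsucc
      exact hσ Z (by rwa [heq] at hZ)
  refine containsInducedCopy_of_subset_iff _ hred fun A B =>
    ⟨fun hAB => glue_subset_glue_iff.2 ⟨hAB, prefixSet_mono σ ?_⟩,
      fun h => (glue_subset_glue_iff.1 h).1⟩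
  exact Nat.findGreatest_mono_left (fun r => HasLadderUnder.mono hAB) k

theorem containsInducedCopy_two_of_forall_isLadder (hk : 4 ^ n < k.factorial)
    (h : ∀ σ : Equiv.Perm (Fin k), ∃ Z, IsLadder Blue σ (k + 1) Z) :
    ContainsInducedCopy 2 (n + k) Blue := by
  choose Z hZ using h
  have hcard : Fintype.card (Finset (Fin n) × Finset (Fin n)) <
      Fintype.card (Equiv.Perm (Fin k)) := by
    simpa [Fintype.card_perm, ← mul_pow] using hk
  obtain ⟨σ, τ, hστ, hends⟩ :=
    Fintype.exists_ne_map_eq_of_card_lt (fun σ => (Z σ 0, Z σ k)) hcard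
  obtain ⟨hZ₀, hZₖ⟩ := Prod.mk.inj hends
  obtain ⟨j, hjk, hj⟩ := exists_prefixSet_ne hστ
  obtain ⟨⟨hσmono, hσblue⟩, ⟨hτmono, hτblue⟩⟩ := And.intro (hZ σ) (hZ τ)
  refine containsInducedCopy_two_of_diamond (hσblue 0 k.succ_pos) (hσblue j (by omega))
    (hτblue j (by omega)) (hτblue k k.lt_succ_self)
    (glue_subset_glue_iff.2 ⟨hσmono j.zero_le, prefixSet_mono σ j.zero_le⟩)
    (glue_subset_glue_iff.2 ⟨hZ₀ ▸ hτmono j.zero_le, by simp⟩)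
    (glue_subset_glue_iff.2 ⟨hZₖ ▸ hσmono hjk, by simp⟩)
    (glue_subset_glue_iff.2 ⟨hτmono hjk, prefixSet_mono τ hjk⟩)
    (fun h => hj ((prefixSet_subset_iff_eq hjk).1 (glue_subset_glue_iff.1 h).2))
    (fun h => hj ((prefixSet_subset_iff_eq hjk).1 (glue_subset_glue_iff.1 h).2).symm)

variable (Blue) in
theorem containsInducedCopy_two_or_compl (hk : 4 ^ n < k.factorial) :
    ContainsInducedCopy 2 (n + k) Blue ∨ ContainsInducedCopy n (n + k) Blueᶜ := by
  by_cases h : ∃ σ : Equiv.Perm (Fin k), ∀ Z, ¬IsLadder Blue σ (k + 1) Z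
  · obtain ⟨σ, hσ⟩ := h
    exact .inr (containsInducedCopy_compl_of_forall_not_isLadder hσ)
  · simp only [not_exists, not_forall, not_not] at h
    exact .inl (containsInducedCopy_two_of_forall_isLadder hk h)

end Ladders

theorem pow_lt_factorial_of_mul_log_lt {b n k : ℕ} (hb : 0 < b)
    (h : n * log b < k * (log k - 1)) : b ^ n < k.factorial := by
  have hk : k ≠ 0 := by
    rintro rfl
    simp only [Nat.cast_zero, zero_mul] at h
    exact h.not_ge (mul_nonneg n.cast_nonneg (log_natCast_nonneg b))
  have hlog : log ((b : ℝ) ^ n) < log (k.factorial : ℝ) := by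
    have hstirling := Stirling.le_log_factorial_stirling hk
    have hlogk : 0 ≤ log (k : ℝ) := log_natCast_nonneg k
    have hlog2π : 0 ≤ log (2 * π) := log_nonneg (by linarith [pi_gt_three])
    rw [log_pow]
    linarith
  exact_mod_cast (log_lt_log_iff (by positivity) (by positivity)).1 hlog

theorem mul_log_four_lt_mul_log_sub_one {x y : ℝ} (hx : 1 < x) (hy : 3 * x / log x ≤ y) :
    x * log 4 < y * (log y - 1) := by
  have hu : 0 < log x := log_pos hx
  have hlog2 := log_two_lt_d9
  have hlog3 : 1 < log 3 := (lt_log_iff_exp_lt (by norm_num)).2 (by linarith [exp_one_lt_d9])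
  have hloglog : log (log x) ≤ log x / 2 := by
    have h := log_le_sub_one_of_pos (half_pos hu)
    rw [log_div hu.ne' two_ne_zero] at h
    linarith
  have hlogy : log x / 2 ≤ log y - 1 := by
    have h := log_le_log (by positivity) hy
    rw [log_div (by positivity) hu.ne', log_mul three_ne_zero (by positivity)] at h
    linarith
  have hlog4 : log (4 : ℝ) = 2 * log 2 := by
    rw [show (4 : ℝ) = 2 ^ 2 by norm_num, log_pow, Nat.cast_ofNat]
  calc x * log 4 < 3 * x / log x * (log x / 2) := by
        rw [hlog4, show 3 * x / log x * (log x / 2) = 3 / 2 * x by field_simp]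
        nlinarith
    _ ≤ y * (log y - 1) :=
        mul_le_mul hy hlogy (by positivity) ((by positivity : (0 : ℝ) ≤ 3 * x / log x).trans hy)

theorem three_mul_div_log_le_floor {n : ℕ} (hn : 2 ≤ n) :
    3 * n / log n ≤ ⌊(6.14 : ℝ) * n / logb 2 n⌋₊ := by
  have hn' : (1 : ℝ) < n := by exact_mod_cast hn
  have hu : 0 < log n := log_pos hn'
  have hun : log n < n := (log_le_sub_one_of_pos (by positivity)).trans_lt (by linarith)
  have hlog2 := log_two_gt_d9
  have hrw : (6.14 : ℝ) * n / logb 2 n = 6.14 * log 2 * n / log n := by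
    rw [logb, div_div_eq_mul_div]
    ring
  calc 3 * n / log n ≤ 6.14 * log 2 * n / log n - 1 := by
        rw [le_sub_iff_add_le, div_add_one hu.ne', div_le_div_iff_of_pos_right hu]
        nlinarith
    _ ≤ ⌊(6.14 : ℝ) * n / logb 2 n⌋₊ := hrw ▸ (Nat.sub_one_lt_floor _).le

end InducedRamsey

open InducedRamsey in
/-- For every `n ≥ 2`, with `N = n + ⌊6.14·n/log₂ n⌋`, every partition of `Q_N` into
families `B` and `R` yields a blue induced copy of `Q_2` or a red induced copy of `Q_n`;
i.e. `R(Q_2, Q_n) ≤ n + 6.14·n/log₂ n` for all `n ≥ 2`. -/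
theorem induced_ramsey_Q2_Qn_upper_explicit :
    ∀ n : ℕ, 2 ≤ n →
      ∀ B R : Set (Finset (Fin (n + ⌊(6.14 : ℝ) * n / Real.logb 2 n⌋₊))),
        B ∪ R = Set.univ → B ∩ R = ∅ →
        ContainsInducedCopy 2 (n + ⌊(6.14 : ℝ) * n / Real.logb 2 n⌋₊) B ∨
        ContainsInducedCopy n (n + ⌊(6.14 : ℝ) * n / Real.logb 2 n⌋₊) R := by
  intro n hn B R hBR _
  have hk : 4 ^ n < ⌊(6.14 : ℝ) * n / Real.logb 2 n⌋₊.factorial := by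
    refine pow_lt_factorial_of_mul_log_lt four_pos ?_
    exact_mod_cast mul_log_four_lt_mul_log_sub_one (by exact_mod_cast hn)
      (three_mul_div_log_le_floor hn)
  exact (containsInducedCopy_two_or_compl B hk).imp_right
    (ContainsInducedCopy.mono (Set.compl_subset_iff_union.2 hBR))
end

section
/- Let n, k ∈ ℕ, let the Boolean lattice Q_{n+k} be partitioned into families B and R, identify [n] as a subset of [n+k], and let π be a permutation of [n+k]∖[n] = {n+1,…,n+k}. Then there exist functions φ: Q_n → R ∪ {⊥} (where ⊥ is a symbol indicating failure, distinct from all sets), α: Q_n → {0,1,…,k+1}, and f assigning to each A ∈ Q_n a chain f(A) = (f(A)_0 ⊆ f(A)_1 ⊆ … ⊆ f(A)_{α(A)−1}) of sets belonging to B, satisfying: (P1) if A, A′ ⊆ [n] and φ(A) ≠ ⊥ and φ(A′) ≠ ⊥, then A′ ⊊ A if and only if φ(A′) ⊊ φ(A); (P2) if A′ ⊆ A ⊆ [n], then α(A′) ≤ α(A); (P3) if α(A) = k+1 then φ(A) = ⊥, and otherwise φ(A) = A ∪ {π(n+1), π(n+2), …, π(n+α(A))} (in particular φ(A) ∩ [n]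 = A); (P4) for every A ⊆ [n], f(A) is a chain in B of length exactly α(A) with f(A)_i ∖ [n] = {π(n+1), π(n+2), …, π(n+i)} for each 0 ≤ i ≤ α(A)−1; (P5) if 1 ≤ α(A) ≤ k, then f(A)_{α(A)−1} ⊆ φ(A). -/
/-- The subsets of `[n]`, viewed inside `[n+k]`: the image of `A : Finset (Fin n)`
under the canonical embedding `Fin n ↪ Fin (n+k)`. -/
def embedLow (n k : ℕ) (A : Finset (Fin n)) : Finset (Fin (n + k)) :=
  A.map (Fin.castLEEmb (Nat.le_add_right n k))

/-- The set `[n]` viewed as a subset of `[n+k]`. -/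
def lowPart (n k : ℕ) : Finset (Fin (n + k)) :=
  Finset.univ.filter (fun x : Fin (n + k) => (x : ℕ) < n)

/-- The set `{π(n+1), π(n+2), …, π(n+i)}`, where the permutation `π` of
`[n+k] ∖ [n]` is modeled as an injection `π : Fin k → Fin (n+k)` whose values have
index `≥ n` (its `j`-th value playing the role of `π(n+j+1)`). -/
def firstVals (n k : ℕ) (π : Fin k → Fin (n + k)) (i : ℕ) : Finset (Fin (n + k)) :=
  (Finset.univ.filter (fun j : Fin k => (j : ℕ) < i)).image π

/-!
Define `α(A)` by recursion along `⊊`: it is the least `i ≥ max_{A' ⊊ A} α(A')` for which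
`A ∪ {π(n+1), …, π(n+i)}` lies in `R`, or `k + 1` if there is none, and let `φ(A)` be that set.
Then `α` is monotone, which gives P2, and P1 follows since `φ(A) ∩ [n] = A`. The chain `f(A)`
consists of the first `α(C)` terms of `f(C)` for a proper subset `C` of maximal `α(C)`,
followed by the sets `A ∪ {π(n+1), …, π(n+i)}` for `α(C) ≤ i < α(A)`, which lie in `B` by
minimality of `α(A)`. Every term `f(A)_i` thus has the form `A' ∪ {π(n+1), …, π(n+i)}` with
`A' ⊆ A` and is not in `R`, which yields P4 and P5.
-/

section LevelChain

variable {ι β : Type*} [Preorder β] {P : Finset ι → ℕ → Prop}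

def IsLevelChain (P : Finset ι → ℕ → Prop) (cand : Finset ι → ℕ → β) (A : Finset ι) (m : ℕ)
    (c : ℕ → β) : Prop :=
  MonotoneOn c (Set.Iio m) ∧ ∀ i < m, ∃ A' ⊆ A, ¬P A' i ∧ c i = cand A' i

variable {cand : Finset ι → ℕ → β}

theorem IsLevelChain.mono_left {A A' : Finset ι} {m : ℕ} {c : ℕ → β}
    (hc : IsLevelChain P cand A m c) (h : A ⊆ A') : IsLevelChain P cand A' m c :=
  ⟨hc.1, fun i hi => (hc.2 i hi).imp fun _ ⟨hA, hrest⟩ => ⟨hA.trans h, hrest⟩⟩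

theorem IsLevelChain.splice (hcand : Monotone cand) (hcand' : ∀ A, Monotone (cand A))
    {A : Finset ι} {j m : ℕ} {c : ℕ → β} (hc : IsLevelChain P cand A j c)
    (hA : ∀ i, j ≤ i → i < m → ¬P A i) :
    IsLevelChain P cand A m (fun i => if i < j then c i else cand A i) := by
  have hc_le : ∀ i < j, c i ≤ cand A (j - 1) := fun i hi => by
    obtain ⟨A', hA', -, hcA'⟩ := hc.2 (j - 1) (by omega)
    calc c i ≤ c (j - 1) := hc.1 hi (show j - 1 < j by omega) (by omega)
      _ = cand A' (j - 1) := hcA'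
      _ ≤ cand A (j - 1) := hcand hA' _
  refine ⟨fun i₁ hi₁ i₂ hi₂ h₁₂ => ?_, fun i hi => ?_⟩
  · dsimp only
    split_ifs with h₁ h₂ h₂
    · exact hc.1 h₁ h₂ h₁₂
    · exact (hc_le i₁ h₁).trans (hcand' A (by omega))
    · omega
    · exact hcand' A h₁₂
  · dsimp only
    split_ifs with h
    · exact hc.2 i h
    · exact ⟨A, subset_rfl, hA i (by omega) hi, rfl⟩

end LevelChain

section Level

variable {ι β : Type*} [DecidableEq ι] [Preorder β]

noncomputable def level (P : Finset ι → ℕ → Prop) (A : Finset ι) : ℕ :=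
  sInf {i | A.ssubsets.attach.sup (fun A' => level P A'.1) ≤ i ∧ P A i}
termination_by A.card
decreasing_by exact Finset.card_lt_card (Finset.mem_ssubsets.mp A'.2)

variable {P : Finset ι → ℕ → Prop}

theorem level_eq (A : Finset ι) :
    level P A = sInf {i | A.ssubsets.sup (level P) ≤ i ∧ P A i} := by
  rw [level, Finset.sup_attach]

theorem level_spec (hP : ∀ A j, ∃ i, j ≤ i ∧ P A i) (A : Finset ι) :
    A.ssubsets.sup (level P) ≤ level P A ∧ P A (level P A) := by
  rw [level_eq]
  exact Nat.sInf_mem (hP A _)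

theorem not_of_lt_level {A : Finset ι} {i : ℕ} (hi : A.ssubsets.sup (level P) ≤ i)
    (hlt : i < level P A) : ¬P A i := by
  rw [level_eq] at hlt
  exact fun h => Nat.notMem_of_lt_sInf hlt ⟨hi, h⟩

theorem level_mono (hP : ∀ A j, ∃ i, j ≤ i ∧ P A i) : Monotone (level P) := by
  intro A' A h
  rcases h.eq_or_ssubset with rfl | h
  · rfl
  · exact (Finset.le_sup (Finset.mem_ssubsets.2 h)).trans (level_spec hP A).1

theorem level_le {m : ℕ} (hm : ∀ A, P A m) (A : Finset ι) : level P A ≤ m := by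
  induction A using Finset.strongInduction with
  | H A ih =>
    rw [level_eq]
    exact Nat.sInf_le ⟨Finset.sup_le fun A' hA' => ih A' (Finset.mem_ssubsets.1 hA'), hm A⟩

variable {cand : Finset ι → ℕ → β}

theorem exists_isLevelChain (hcand : Monotone cand) (hcand' : ∀ A, Monotone (cand A))
    (A : Finset ι) :
    ∃ c, IsLevelChain P cand A (level P A) c := by
  induction A using Finset.strongInduction with
  | H A ih =>
    set j := A.ssubsets.sup (level P)
    obtain ⟨c, hc⟩ : ∃ c, IsLevelChain P cand A j c := by
      rcases A.ssubsets.eq_empty_or_nonempty with h | h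
      · refine ⟨cand A, fun i hi => ?_, fun i hi => ?_⟩ <;> simp [j, h] at hi
      · obtain ⟨C, hC, hCj⟩ := A.ssubsets.exists_mem_eq_sup h (level P)
        obtain ⟨c, hc⟩ := ih C (Finset.mem_ssubsets.1 hC)
        refine ⟨c, ?_⟩
        rw [show j = level P C from hCj]
        exact hc.mono_left (Finset.mem_ssubsets.1 hC).subset
    exact ⟨_, hc.splice hcand hcand' fun i hi hlt => not_of_lt_level hi hlt⟩

end Level

section Candidate

variable {n k : ℕ} {π : Fin k → Fin (n + k)}

def candidate (n k : ℕ) (π : Fin k → Fin (n + k)) (A : Finset (Fin n)) (i : ℕ) :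
    Finset (Fin (n + k)) :=
  embedLow n k A ∪ firstVals n k π i

theorem firstVals_mono : Monotone (firstVals n k π) := fun _ _ h =>
  Finset.image_subset_image (Finset.monotone_filter_right _ fun _ _ hj => lt_of_lt_of_le hj h)

theorem candidate_mono : Monotone (candidate n k π) := fun _ _ h _ =>
  Finset.union_subset_union_left (Finset.map_subset_map.2 h)

theorem candidate_mono_right (A : Finset (Fin n)) : Monotone (candidate n k π A) := fun _ _ h =>
  Finset.union_subset_union_right (firstVals_mono h)

theorem embedLow_subset_lowPart (A : Finset (Fin n)) : embedLow n k A ⊆ lowPart n k := by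
  intro x hx
  obtain ⟨a, -, rfl⟩ := Finset.mem_map.1 hx
  simp [lowPart]

theorem disjoint_firstVals_lowPart (hπtop : ∀ j : Fin k, n ≤ ((π j) : ℕ)) (i : ℕ) :
    Disjoint (firstVals n k π i) (lowPart n k) := by
  simp only [Finset.disjoint_left, firstVals, lowPart, Finset.mem_image, Finset.mem_filter]
  rintro _ ⟨j, -, rfl⟩ ⟨-, hj⟩
  exact absurd (hπtop j) (not_le.2 hj)

theorem candidate_inter_lowPart (hπtop : ∀ j : Fin k, n ≤ ((π j) : ℕ)) (A : Finset (Fin n))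
    (i : ℕ) : candidate n k π A i ∩ lowPart n k = embedLow n k A := by
  rw [candidate, Finset.union_inter_distrib_right,
    Finset.inter_eq_left.2 (embedLow_subset_lowPart A),
    Finset.disjoint_iff_inter_eq_empty.1 (disjoint_firstVals_lowPart hπtop i), Finset.union_empty]

theorem candidate_sdiff_lowPart (hπtop : ∀ j : Fin k, n ≤ ((π j) : ℕ)) (A : Finset (Fin n))
    (i : ℕ) : candidate n k π A i \ lowPart n k = firstVals n k π i := by
  rw [candidate, Finset.union_sdiff_distrib,
    Finset.sdiff_eq_empty_iff_subset.2 (embedLow_subset_lowPart A),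
    Finset.sdiff_eq_self_of_disjoint (disjoint_firstVals_lowPart hπtop i), Finset.empty_union]

theorem subset_of_candidate_subset (hπtop : ∀ j : Fin k, n ≤ ((π j) : ℕ))
    {A A' : Finset (Fin n)} {i i' : ℕ} (h : candidate n k π A' i' ⊆ candidate n k π A i) :
    A' ⊆ A := by
  have := Finset.inter_subset_inter_right (u := lowPart n k) h
  rwa [candidate_inter_lowPart hπtop, candidate_inter_lowPart hπtop, embedLow,
    embedLow, Finset.map_subset_map] at this

theorem candidate_ssubset_candidate_iff (hπtop : ∀ j : Fin k, n ≤ ((π j) : ℕ))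
    {α : Finset (Fin n) → ℕ} (hα : Monotone α) {A A' : Finset (Fin n)} :
    candidate n k π A' (α A') ⊂ candidate n k π A (α A) ↔ A' ⊂ A := by
  refine ⟨fun h => ?_, fun h => ?_⟩
  · refine Finset.ssubset_iff_subset_ne.2 ⟨subset_of_candidate_subset hπtop h.subset, ?_⟩
    rintro rfl
    exact h.ne rfl
  · refine Finset.ssubset_iff_subset_ne.2 ⟨?_, fun heq => ?_⟩
    · exact (candidate_mono h.subset _).trans (candidate_mono_right A (hα h.subset))
    · exact h.not_subset (subset_of_candidate_subset hπtop heq.superset)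

end Candidate

/-- Holds vacuously for `i > k`, so that level `k + 1` encodes the failure `⊥`. -/
def LandsIn (n k : ℕ) (R : Set (Finset (Fin (n + k)))) (π : Fin k → Fin (n + k))
    (A : Finset (Fin n)) (i : ℕ) : Prop :=
  i ≤ k → candidate n k π A i ∈ R

section LandsIn

variable {n k : ℕ} {R : Set (Finset (Fin (n + k)))} {π : Fin k → Fin (n + k)}

theorem landsIn_of_lt {A : Finset (Fin n)} {i : ℕ} (hi : k < i) : LandsIn n k R π A i :=
  fun h => absurd h (not_le.2 hi)

theorem exists_le_landsIn (A : Finset (Fin n)) (j : ℕ) : ∃ i, j ≤ i ∧ LandsIn n k R π A i :=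
  ⟨max j (k + 1), le_max_left _ _, landsIn_of_lt (by omega)⟩

theorem level_landsIn_le (A : Finset (Fin n)) : level (LandsIn n k R π) A ≤ k + 1 :=
  level_le (fun _ => landsIn_of_lt k.lt_succ_self) A

theorem exists_chain_mem_B (B : Set (Finset (Fin (n + k)))) (hunion : B ∪ R = Set.univ)
    (hπtop : ∀ j : Fin k, n ≤ ((π j) : ℕ)) (A : Finset (Fin n)) :
    ∃ c : ℕ → Finset (Fin (n + k)), MonotoneOn c (Set.Iio (level (LandsIn n k R π) A)) ∧
      ∀ i < level (LandsIn n k R π) A,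
        (c i ∈ B ∧ c i \ lowPart n k = firstVals n k π i) ∧ c i ⊆ candidate n k π A i := by
  obtain ⟨c, hc_mono, hc⟩ :=
    exists_isLevelChain (cand := candidate n k π) candidate_mono candidate_mono_right A
  refine ⟨c, hc_mono, fun i hi => ?_⟩
  obtain ⟨A', hA', hA'R, hcA'⟩ := hc i hi
  rw [hcA']
  rw [LandsIn, Classical.not_imp] at hA'R
  have hB : candidate n k π A' i ∈ B ∪ R := hunion ▸ Set.mem_univ _
  exact ⟨⟨hB.resolve_right hA'R.2, candidate_sdiff_lowPart hπtop A' i⟩, candidate_mono hA' i⟩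

end LandsIn

theorem exists_embedding_functions_general (n k : ℕ)
    (B R : Set (Finset (Fin (n + k))))
    (hunion : B ∪ R = Set.univ)
    (π : Fin k → Fin (n + k))
    (hπtop : ∀ j : Fin k, n ≤ ((π j) : ℕ)) :
    ∃ (φ : Finset (Fin n) → Option (Finset (Fin (n + k))))
      (α : Finset (Fin n) → ℕ)
      (f : Finset (Fin n) → ℕ → Finset (Fin (n + k))),
      -- α takes values in {0, 1, …, k+1}
      (∀ A, α A ≤ k + 1) ∧
      -- φ maps into R ∪ {⊥}
      (∀ A S, φ A = some S → S ∈ R) ∧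
      -- P1: if φ(A') ≠ ⊥ and φ(A) ≠ ⊥ then A' ⊊ A ↔ φ(A') ⊊ φ(A)
      (∀ A A' S S', φ A = some S → φ A' = some S' → (A' ⊂ A ↔ S' ⊂ S)) ∧
      -- P2: A' ⊆ A implies α(A') ≤ α(A)
      (∀ A A' : Finset (Fin n), A' ⊆ A → α A' ≤ α A) ∧
      -- P3: α(A) = k+1 gives failure; otherwise φ(A) = A ∪ {π(n+1),…,π(n+α(A))}
      (∀ A, (α A = k + 1 → φ A = none) ∧
        (α A ≤ k → φ A = some (embedLow n k A ∪ firstVals n k π (α A)))) ∧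
      -- P4: f(A) is a chain of length α(A) in B with
      --     f(A)_i ∖ [n] = {π(n+1),…,π(n+i)}
      (∀ A, (∀ i j : ℕ, i ≤ j → j < α A → f A i ⊆ f A j) ∧
        (∀ i : ℕ, i < α A →
          f A i ∈ B ∧ f A i \ lowPart n k = firstVals n k π i)) ∧
      -- P5: if 1 ≤ α(A) ≤ k then f(A)_{α(A)-1} ⊆ φ(A)
      (∀ A S, 1 ≤ α A → α A ≤ k → φ A = some S → f A (α A - 1) ⊆ S) := by
  choose f hf_mono hf using exists_chain_mem_B B hunion hπtop
  set α := level (LandsIn n k R π)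
  have hα : Monotone α := level_mono exists_le_landsIn
  have hφ : ∀ A S, (if α A ≤ k then some (candidate n k π A (α A)) else none) = some S ↔
      α A ≤ k ∧ candidate n k π A (α A) = S := fun _ _ => by
    rw [Option.ite_none_right_eq_some, Option.some_inj]
  refine ⟨fun A => if α A ≤ k then some (candidate n k π A (α A)) else none, α, f,
    level_landsIn_le, fun A S hS => ?_, fun A A' S S' hS hS' => ?_, fun _ _ h => hα h,
    fun A => ⟨fun h => if_neg (by omega), fun h => if_pos h⟩,
    fun A => ⟨fun i j hij hj => hf_mono A (hij.trans_lt hj) hj hij, fun i hi => (hf A i hi).1⟩,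
    fun A S h₁ hk hS => ?_⟩
  · obtain ⟨hk, rfl⟩ := (hφ A S).1 hS
    exact (level_spec exists_le_landsIn A).2 hk
  · obtain ⟨-, rfl⟩ := (hφ A S).1 hS
    obtain ⟨-, rfl⟩ := (hφ A' S').1 hS'
    exact (candidate_ssubset_candidate_iff hπtop hα).symm
  · obtain ⟨-, rfl⟩ := (hφ A S).1 hS
    exact (hf A _ (by omega)).2.trans (candidate_mono_right A (Nat.sub_le _ 1))

/-- Claim 3 of the paper: given a partition of `Q_{n+k}` into `B` and `R` and a
permutation `π` of `[n+k] ∖ [n]`, there exist functions `φ : Q_n → R ∪ {⊥}`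
(modeled with `Option`, `none` being the failure symbol `⊥`), `α : Q_n → {0,…,k+1}`
and `f` assigning to each `A ∈ Q_n` a chain `f(A)_0 ⊆ … ⊆ f(A)_{α(A)-1}` of sets of
`B`, satisfying properties P1–P5. -/
theorem exists_embedding_functions (n k : ℕ)
    (B R : Set (Finset (Fin (n + k))))
    (hunion : B ∪ R = Set.univ) (hdisj : B ∩ R = ∅)
    (π : Fin k → Fin (n + k))
    (hπinj : Function.Injective π)
    (hπtop : ∀ j : Fin k, n ≤ ((π j) : ℕ)) :
    ∃ (φ : Finset (Fin n) → Option (Finset (Fin (n + k))))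
      (α : Finset (Fin n) → ℕ)
      (f : Finset (Fin n) → ℕ → Finset (Fin (n + k))),
      -- α takes values in {0, 1, …, k+1}
      (∀ A, α A ≤ k + 1) ∧
      -- φ maps into R ∪ {⊥}
      (∀ A S, φ A = some S → S ∈ R) ∧
      -- P1: if φ(A') ≠ ⊥ and φ(A) ≠ ⊥ then A' ⊊ A ↔ φ(A') ⊊ φ(A)
      (∀ A A' S S', φ A = some S → φ A' = some S' → (A' ⊂ A ↔ S' ⊂ S)) ∧
      -- P2: A' ⊆ A implies α(A') ≤ α(A)
      (∀ A A' : Finset (Fin n), A' ⊆ A → α A' ≤ α A) ∧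
      -- P3: α(A) = k+1 gives failure; otherwise φ(A) = A ∪ {π(n+1),…,π(n+α(A))}
      (∀ A, (α A = k + 1 → φ A = none) ∧
        (α A ≤ k → φ A = some (embedLow n k A ∪ firstVals n k π (α A)))) ∧
      -- P4: f(A) is a chain of length α(A) in B with
      --     f(A)_i ∖ [n] = {π(n+1),…,π(n+i)}
      (∀ A, (∀ i j : ℕ, i ≤ j → j < α A → f A i ⊆ f A j) ∧
        (∀ i : ℕ, i < α A →
          f A i ∈ B ∧ f A i \ lowPart n k = firstVals n k π i)) ∧
      -- P5: if 1 ≤ α(A) ≤ k then f(A)_{α(A)-1} ⊆ φ(A)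
      (∀ A S, 1 ≤ α A → α A ≤ k → φ A = some S → f A (α A - 1) ⊆ S) :=
  exists_embedding_functions_general n k B R hunion π hπtop
end

section
/- Let n, k ∈ ℕ with k ≥ 2, and let π₁ and π₂ be two distinct permutations of {n+1, …, n+k}. For j = 1, 2, let q^j_0 ⊆ q^j_1 ⊆ … ⊆ q^j_k be a chain of subsets of [n+k] satisfying q^j_i ∖ [n] = {π_j(n+1), π_j(n+2), …, π_j(n+i)} for all 0 ≤ i ≤ k. If q^1_0 = q^2_0 and q^1_k = q^2_k, then there exists an index i with 1 ≤ i ≤ k−1 such that q^1_i ⊄ q^2_i and q^2_i ⊄ q^1_i; consequently, the four sets q^1_0, q^1_i, q^2_i, q^1_k form an induced copy of Q_2 (ordered by inclusion). -/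
/-! Let `m` be the first position where `π₁` and `π₂` differ. The first `m + 1` values of
`π₁` and of `π₂` are then incomparable sets (each contains its own `m`-th value, which the
other misses), so `q¹_{m+1}` and `q²_{m+1}` are incomparable as well. Since both
permutations have the same set of values, the `m`-th value of `π₂` occurs later in `π₁`,
whence `m + 1 < k`. Together with the common bottom and top, two incomparable middle sets
form an induced `Q_2`. -/

open Function

lemma containsInducedCopy_two {N : ℕ} {a b c d : Finset (Fin N)}
    (hab : a ⊆ b) (hac : a ⊆ c) (hbd : b ⊆ d) (hcd : c ⊆ d)
    (hbc : ¬ b ⊆ c) (hcb : ¬ c ⊆ b) :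
    ContainsInducedCopy 2 N {a, b, c, d} := by
  classical
  let φ : Finset (Fin 2) → Finset (Fin N) := fun A =>
    if 0 ∈ A then (if 1 ∈ A then d else b) else (if 1 ∈ A then c else a)
  have had : a ⊆ d := hab.trans hbd
  have hba : ¬ b ⊆ a := fun h => hbc (h.trans hac)
  have hca : ¬ c ⊆ a := fun h => hcb (h.trans hab)
  have hdb : ¬ d ⊆ b := fun h => hcb (hcd.trans h)
  have hdc : ¬ d ⊆ c := fun h => hbc (hbd.trans h)
  have hda : ¬ d ⊆ a := fun h => hbc (hbd.trans (h.trans hac))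
  have hφ : ∀ A B, A ⊆ B ↔ φ A ⊆ φ B := by
    intro A B
    rw [Finset.subset_iff, Fin.forall_fin_two]
    by_cases h0A : 0 ∈ A <;> by_cases h1A : 1 ∈ A <;> by_cases h0B : 0 ∈ B <;>
      by_cases h1B : 1 ∈ B <;> simp [φ, *]
  refine ⟨φ, fun A B h => ((hφ A B).2 h.le).antisymm ((hφ B A).2 h.ge), fun A => ?_, hφ⟩
  by_cases h0A : 0 ∈ A <;> by_cases h1A : 1 ∈ A <;> simp [φ, *]

lemma exists_first_ne {α β : Type*} [LinearOrder α] [WellFoundedLT α] {f g : α → β}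
    (h : f ≠ g) : ∃ m, f m ≠ g m ∧ ∀ j < m, f j = g j := by
  obtain ⟨j, hj⟩ := ne_iff.mp h
  obtain ⟨m, hm, hmin⟩ := wellFounded_lt.has_min {j | f j ≠ g j} ⟨j, hj⟩
  exact ⟨m, hm, fun j hj => not_not.mp fun hne => hmin j hne hj⟩

section FirstDifference

variable {n k : ℕ} {π π' : Fin k → Fin (n + k)} {m : Fin k}

lemma mem_firstVals {i : ℕ} {x : Fin (n + k)} :
    x ∈ firstVals n k π i ↔ ∃ j : Fin k, (j : ℕ) < i ∧ π j = x := by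
  simp [firstVals]

lemma apply_not_mem_firstVals_succ (hπ' : Injective π') (hagree : ∀ j < m, π j = π' j)
    (hm : π m ≠ π' m) : π' m ∉ firstVals n k π (m + 1) := by
  intro hmem
  obtain ⟨j, hj, hjm⟩ := mem_firstVals.mp hmem
  rcases (Nat.lt_succ_iff.mp hj).lt_or_eq with hlt | heq
  · have : j = m := hπ' ((hagree j hlt).symm.trans hjm)
    exact hlt.ne (congrArg Fin.val this)
  · exact hm (Fin.ext heq ▸ hjm)

lemma firstVals_succ_not_subset (hπ' : Injective π') (hagree : ∀ j < m, π j = π' j)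
    (hm : π m ≠ π' m) : ¬ firstVals n k π' (m + 1) ⊆ firstVals n k π (m + 1) :=
  fun h => apply_not_mem_firstVals_succ hπ' hagree hm
    (h (mem_firstVals.mpr ⟨m, Nat.lt_succ_self m, rfl⟩))

lemma succ_lt_of_firstVals_eq (hπ' : Injective π') (hagree : ∀ j < m, π j = π' j)
    (hm : π m ≠ π' m) (hrange : firstVals n k π k = firstVals n k π' k) :
    (m : ℕ) + 1 < k := by
  obtain ⟨j, -, hj⟩ :=
    mem_firstVals.mp (hrange ▸ mem_firstVals.mpr ⟨m, m.isLt, rfl⟩ : π' m ∈ firstVals n k π k)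
  have hlate : ¬ (j : ℕ) < m + 1 := fun hjm =>
    apply_not_mem_firstVals_succ hπ' hagree hm (mem_firstVals.mpr ⟨j, hjm, hj⟩)
  omega

end FirstDifference

theorem distinct_perm_chains_give_Q2_general (n k : ℕ)
    (π₁ π₂ : Fin k → Fin (n + k))
    (hπ₁inj : Function.Injective π₁) (hπ₂inj : Function.Injective π₂)
    (hne : π₁ ≠ π₂)
    (q₁ q₂ : ℕ → Finset (Fin (n + k)))
    (hq₁chain : ∀ i j : ℕ, i ≤ j → j ≤ k → q₁ i ⊆ q₁ j)
    (hq₂chain : ∀ i j : ℕ, i ≤ j → j ≤ k → q₂ i ⊆ q₂ j)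
    (hq₁ : ∀ i : ℕ, i ≤ k → q₁ i \ lowPart n k = firstVals n k π₁ i)
    (hq₂ : ∀ i : ℕ, i ≤ k → q₂ i \ lowPart n k = firstVals n k π₂ i)
    (hbot : q₁ 0 = q₂ 0) (htop : q₁ k = q₂ k) :
    ∃ i : ℕ, 1 ≤ i ∧ i ≤ k - 1 ∧
      ¬ q₁ i ⊆ q₂ i ∧ ¬ q₂ i ⊆ q₁ i ∧
      ContainsInducedCopy 2 (n + k) {q₁ 0, q₁ i, q₂ i, q₁ k} := by
  obtain ⟨m, hm, hagree⟩ := exists_first_ne hne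
  have hagree' : ∀ j < m, π₂ j = π₁ j := fun j hj => (hagree j hj).symm
  have hrange : firstVals n k π₁ k = firstVals n k π₂ k := by
    rw [← hq₁ k le_rfl, ← hq₂ k le_rfl, htop]
  have hmk : (m : ℕ) + 1 < k := succ_lt_of_firstVals_eq hπ₂inj hagree hm hrange
  have hik : (m : ℕ) + 1 ≤ k := hmk.le
  have h12 : ¬ q₁ (m + 1) ⊆ q₂ (m + 1) := fun h =>
    firstVals_succ_not_subset hπ₁inj hagree' (Ne.symm hm)
      (hq₁ _ hik ▸ hq₂ _ hik ▸ Finset.sdiff_subset_sdiff h le_rfl)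
  have h21 : ¬ q₂ (m + 1) ⊆ q₁ (m + 1) := fun h =>
    firstVals_succ_not_subset hπ₂inj hagree hm
      (hq₁ _ hik ▸ hq₂ _ hik ▸ Finset.sdiff_subset_sdiff h le_rfl)
  refine ⟨m + 1, by omega, by omega, h12, h21, containsInducedCopy_two
    (hq₁chain 0 _ (Nat.zero_le _) hik) (hbot ▸ hq₂chain 0 _ (Nat.zero_le _) hik)
    (hq₁chain _ k hik le_rfl) (htop ▸ hq₂chain _ k hik le_rfl) h12 h21⟩

/-- Two chains `q¹_0 ⊆ … ⊆ q¹_k` and `q²_0 ⊆ … ⊆ q²_k` in `Q_{n+k}` associated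
with two distinct permutations `π₁, π₂` of `[n+k] ∖ [n]` (so that
`qʲ_i ∖ [n] = {π_j(n+1),…,π_j(n+i)}`), having the same bottom and top elements,
contain incomparable middle sets `q¹_i`, `q²_i`, and the four sets
`q¹_0, q¹_i, q²_i, q¹_k` form an induced copy of `Q_2`. -/
theorem distinct_perm_chains_give_Q2 (n k : ℕ) (hk : 2 ≤ k)
    (π₁ π₂ : Fin k → Fin (n + k))
    (hπ₁inj : Function.Injective π₁) (hπ₂inj : Function.Injective π₂)
    (hπ₁top : ∀ j : Fin k, n ≤ ((π₁ j) : ℕ)) (hπ₂top : ∀ j : Fin k, n ≤ ((π₂ j) : ℕ))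
    (hne : π₁ ≠ π₂)
    (q₁ q₂ : ℕ → Finset (Fin (n + k)))
    (hq₁chain : ∀ i j : ℕ, i ≤ j → j ≤ k → q₁ i ⊆ q₁ j)
    (hq₂chain : ∀ i j : ℕ, i ≤ j → j ≤ k → q₂ i ⊆ q₂ j)
    (hq₁ : ∀ i : ℕ, i ≤ k → q₁ i \ lowPart n k = firstVals n k π₁ i)
    (hq₂ : ∀ i : ℕ, i ≤ k → q₂ i \ lowPart n k = firstVals n k π₂ i)
    (hbot : q₁ 0 = q₂ 0) (htop : q₁ k = q₂ k) :
    ∃ i : ℕ, 1 ≤ i ∧ i ≤ k - 1 ∧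
      ¬ q₁ i ⊆ q₂ i ∧ ¬ q₂ i ⊆ q₁ i ∧
      ContainsInducedCopy 2 (n + k) {q₁ 0, q₁ i, q₂ i, q₁ k} :=
  distinct_perm_chains_give_Q2_general n k π₁ π₂ hπ₁inj hπ₂inj hne q₁ q₂ hq₁chain hq₂chain hq₁ hq₂
    hbot htop
end

section
/- Let N, k ∈ ℕ with N > 3 and k ≥ √(8N − 15). Then there exists a family C of (k+1)-element subsets of [N] such that the symmetric difference of any two distinct members of C has size at least 4, and the following holds: for all n, m ∈ ℕ with n + m = N and k ≤ n − √(8N − 15), for every m-element set Y ⊆ [N] and every y ∈ Y, there is a k-element set C ⊆ [N]∖Y such that C ∪ {y} ∈ C. -/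
/-!
Take a prime `N ≤ p ≤ 2N - 2` (Bertrand) and let the code consist of the `(k+1)`-sets whose
elements sum to `0` modulo `p`. Two codewords at distance `2` differ by swapping one element
for another, which changes the sum since `Fin N → ZMod p` is injective; so distances are at
least `4`. For the covering property, `-y` must be the sum of `k` distinct elements of the
`n`-set `[N] ∖ Y`. Since `k` and `n - k` are both at least `√(8N - 15)`, we have
`p - 1 ≤ k (n - k)`, and the Dias da Silva–Hamidoune theorem applies.

That theorem is proved with the Combinatorial Nullstellensatz, following Alon–Nathanson–Ruzsa:
if `t` is not a sum of `k` distinct elements of `B ⊆ ZMod p`, then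
`((∑ xᵢ - t) ^ (p - 1) - 1) * ∏_{i<j} (xⱼ - xᵢ)` vanishes on `Bᵏ`. Yet its coefficient at a
suitable monomial `x^m` of top degree, multiplied by `∏ mᵢ!`, is
`(p - 1)! ∏_{i<j} (mⱼ - mᵢ) ≠ 0`.
-/

open Finset MvPolynomial Matrix
open Function (Injective)
open Equiv (Perm)
open scoped Nat

section Polynomial

variable {R : Type*} [CommRing R]

theorem totalDegree_sub_C_pow_sub_pow_le {σ : Type*} (a : MvPolynomial σ R) (c : R) (n : ℕ) :
    ((a - C c) ^ (n + 1) - a ^ (n + 1)).totalDegree ≤ n * a.totalDegree := by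
  induction n with
  | zero => simp
  | succ n ih =>
    have hsplit : (a - C c) ^ (n + 2) - a ^ (n + 2)
        = (a - C c) * ((a - C c) ^ (n + 1) - a ^ (n + 1)) - C c * a ^ (n + 1) := by ring
    rw [hsplit]
    refine (totalDegree_sub _ _).trans (max_le ?_ ?_)
    · calc _ ≤ (a - C c).totalDegree + ((a - C c) ^ (n + 1) - a ^ (n + 1)).totalDegree :=
            totalDegree_mul _ _
        _ ≤ (n + 1) * a.totalDegree := by
          rw [add_mul, one_mul, add_comm]; gcongr; exact totalDegree_sub_C_le _ _
    · calc _ ≤ (C c).totalDegree + (a ^ (n + 1)).totalDegree := totalDegree_mul _ _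
        _ ≤ (n + 1) * a.totalDegree := by rw [totalDegree_C, zero_add]; exact totalDegree_pow _ _

theorem totalDegree_sum_X_le_one {σ : Type*} [Fintype σ] :
    (∑ i, X i : MvPolynomial σ R).totalDegree ≤ 1 :=
  totalDegree_finsetSum_le fun i _ => (totalDegree_monomial_le _ _).trans (by simp)

theorem coeff_sum_X_pow_mul_monomial_mul_prod_factorial {σ : Type*} [Fintype σ]
    (d e : σ →₀ ℕ) (n : ℕ) (h : d.degree = n + e.degree) :
    coeff d ((∑ i, X i : MvPolynomial σ R) ^ n * monomial e 1) * ∏ i, ((d i)! : R)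
      = n ! * ∏ i, ((d i).descFactorial (e i) : R) := by
  classical
  rw [coeff_mul_monomial', mul_one]
  split_ifs with hed
  · have hdeg : (d - e).degree = n := by
      have := congrArg Finsupp.degree (tsub_add_cancel_of_le hed)
      rw [map_add] at this
      omega
    rw [coeff_sum_X_pow_of_fintype, if_pos (by exact hdeg)]
    have hfact : ∀ i, (d i)! = ((d - e) i)! * (d i).descFactorial (e i) := fun i => by
      rw [Finsupp.tsub_apply, Nat.factorial_mul_descFactorial (hed i)]
    have hspec := Nat.multinomial_spec univ (d - e)
    rw [← Finsupp.degree_eq_sum, hdeg,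
      ← Finsupp.multinomial_eq_of_support_subset (subset_univ _)] at hspec
    have key : (d - e).multinomial * ∏ i, (d i)! = n ! * ∏ i, (d i).descFactorial (e i) := by
      simp only [hfact, prod_mul_distrib, ← hspec]
      ring
    simpa using congrArg (Nat.cast : ℕ → R) key
  · obtain ⟨i, hi⟩ : ∃ i, d i < e i := by simpa [Finsupp.le_def] using hed
    rw [zero_mul, prod_eq_zero (mem_univ i) (by rw [Nat.descFactorial_of_lt hi, Nat.cast_zero]),
      mul_zero]

variable {k : ℕ}

theorem det_vandermonde_X_eq_sum_monomial :
    (vandermonde (X : Fin k → MvPolynomial (Fin k) R)).det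
      = ∑ σ : Perm (Fin k),
          Perm.sign σ • monomial (Finsupp.equivFunOnFinite.symm fun i => (σ i : ℕ)) 1 := by
  rw [← det_transpose, det_apply]
  refine sum_congr rfl fun σ _ => ?_
  rw [monomial_eq, C_1, one_mul, Finsupp.prod_fintype _ _ fun _ => pow_zero _]
  simp

theorem totalDegree_det_vandermonde_X_le :
    (vandermonde (X : Fin k → MvPolynomial (Fin k) R)).det.totalDegree
      ≤ ∑ i : Fin k, (i : ℕ) := by
  rw [det_vandermonde_X_eq_sum_monomial]
  refine totalDegree_finsetSum_le fun σ _ => (totalDegree_smul_le _ _).trans ?_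
  refine (totalDegree_monomial_le _ _).trans (le_of_eq ?_)
  rw [Finsupp.sum_fintype _ _ fun _ => rfl]
  exact Equiv.sum_comp σ (fun i => (i : ℕ))

theorem eval_det_vandermonde_X (z : Fin k → R) :
    eval z (vandermonde (X : Fin k → MvPolynomial (Fin k) R)).det = (vandermonde z).det := by
  rw [RingHom.map_det]
  congr 1
  ext i j
  simp

theorem det_vandermonde_natCast_eq_sum (d : Fin k → ℕ) :
    (vandermonde fun i => (d i : R)).det
      = ∑ σ : Perm (Fin k), Perm.sign σ • ∏ i, ((d i).descFactorial (σ i) : R) := by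
  -- `descPochhammer_natDegree` needs a domain: compute over `ℤ`, then map to `R`.
  have hℤ : (vandermonde fun i => (d i : ℤ)).det
      = ∑ σ : Perm (Fin k), Perm.sign σ • ∏ i, ((d i).descFactorial (σ i) : ℤ) := by
    rw [det_eval_matrixOfPolynomials_eq_det_vandermonde _ (fun j => descPochhammer ℤ j)
      (fun j => descPochhammer_natDegree ℤ j) (fun j => monic_descPochhammer ℤ j),
      ← det_transpose, det_apply]
    simp [descPochhammer_eval_eq_descFactorial]
  have := congrArg (Int.castRingHom R) hℤ
  rw [RingHom.map_det] at this
  convert this using 1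
  · congr 1
    ext i j
    simp
  · simp

theorem coeff_sum_X_pow_mul_det_vandermonde_X_mul_prod_factorial (d : Fin k →₀ ℕ) (n : ℕ)
    (h : d.degree = n + ∑ i : Fin k, (i : ℕ)) :
    coeff d ((∑ i, X i) ^ n * (vandermonde (X : Fin k → MvPolynomial (Fin k) R)).det)
        * ∏ i, ((d i)! : R)
      = n ! * (vandermonde fun i => (d i : R)).det := by
  rw [det_vandermonde_natCast_eq_sum, det_vandermonde_X_eq_sum_monomial, mul_sum, coeff_sum,
    sum_mul, mul_sum]
  refine sum_congr rfl fun σ _ => ?_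
  rw [mul_smul_comm, coeff_smul, smul_mul_assoc, mul_smul_comm,
    coeff_sum_X_pow_mul_monomial_mul_prod_factorial]
  · simp
  · rw [h, Finsupp.degree_eq_sum]
    simpa using (Equiv.sum_comp σ (fun i => (i : ℕ))).symm

theorem totalDegree_sum_X_sub_C_pow_sub_one_mul_det_vandermonde_X_le (t : R) (n : ℕ) :
    (((∑ i, X i - C t) ^ n - 1) * (vandermonde (X : Fin k → MvPolynomial (Fin k) R)).det
      ).totalDegree ≤ n + ∑ i : Fin k, (i : ℕ) := by
  refine (totalDegree_mul _ _).trans (add_le_add ?_ totalDegree_det_vandermonde_X_le)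
  refine (totalDegree_sub _ _).trans (max_le ?_ (by simp))
  refine (totalDegree_pow _ _).trans ?_
  simpa using Nat.mul_le_mul_left n ((totalDegree_sub_C_le _ _).trans totalDegree_sum_X_le_one)

theorem coeff_sum_X_sub_C_pow_sub_one_mul_det_vandermonde_X (t : R) {n : ℕ} (hn : n ≠ 0)
    (d : Fin k →₀ ℕ) (h : d.degree = n + ∑ i : Fin k, (i : ℕ)) :
    coeff d (((∑ i, X i - C t) ^ n - 1)
        * (vandermonde (X : Fin k → MvPolynomial (Fin k) R)).det)
      = coeff d ((∑ i, X i) ^ n * (vandermonde (X : Fin k → MvPolynomial (Fin k) R)).det) := by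
  obtain ⟨n, rfl⟩ : ∃ m, n = m + 1 := ⟨n - 1, by omega⟩
  set A : MvPolynomial (Fin k) R := ∑ i, X i
  set V := (vandermonde (X : Fin k → MvPolynomial (Fin k) R)).det
  have hlower : (((A - C t) ^ (n + 1) - A ^ (n + 1) - 1) * V).totalDegree < d.degree := by
    have hA : n * A.totalDegree ≤ n := by
      simpa using Nat.mul_le_mul_left n totalDegree_sum_X_le_one
    calc _ ≤ ((A - C t) ^ (n + 1) - A ^ (n + 1) - 1).totalDegree + V.totalDegree :=
          totalDegree_mul _ _
      _ ≤ n + ∑ i : Fin k, (i : ℕ) := by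
          refine add_le_add ((totalDegree_sub _ _).trans (max_le ?_ (by simp)))
            totalDegree_det_vandermonde_X_le
          exact (totalDegree_sub_C_pow_sub_pow_le A t n).trans hA
      _ < d.degree := by omega
  rw [← add_zero (coeff d (A ^ (n + 1) * V)), ← coeff_eq_zero_of_totalDegree_lt hlower,
    ← coeff_add]
  congr 1
  ring

end Polynomial

theorem eval_sum_X_sub_C_pow_sub_one_mul_det_vandermonde_X_eq_zero {F : Type*} [Field F]
    [Fintype F] {k : ℕ} {t : F} (z : Fin k → F) (hz : Injective z → ∑ i, z i ≠ t) :
    eval z (((∑ i, X i - C t) ^ (Fintype.card F - 1) - 1)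
      * (vandermonde (X : Fin k → MvPolynomial (Fin k) F)).det) = 0 := by
  by_cases hinj : Injective z
  · simp [FiniteField.pow_card_sub_one_eq_one _ (sub_ne_zero.2 (hz hinj))]
  · simp [eval_det_vandermonde_X, det_vandermonde_ne_zero_iff.not_right.2 hinj]

theorem exists_strictMono_sum_eq {k D R : ℕ} (h : R ≤ k * D) :
    ∃ m : Fin k → ℕ, StrictMono m ∧ (∀ i, m i ≤ i + D) ∧
      ∑ i, m i = R + ∑ i : Fin k, (i : ℕ) := by
  set F : ℕ → ℕ := fun j => R - (k - j) * D
  have hF : Monotone F := fun a b hab => Nat.sub_le_sub_left (Nat.mul_le_mul_right _ (by omega)) _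
  set e : ℕ → ℕ := fun j => min D (R - (k - 1 - j) * D)
  have he : Monotone e := fun a b hab =>
    min_le_min_left _ (Nat.sub_le_sub_left (Nat.mul_le_mul_right _ (by omega)) _)
  have htele : ∀ j < k, e j = F (j + 1) - F j := fun j hj => by
    have : (k - j) * D = (k - 1 - j) * D + D := by
      rw [← Nat.succ_mul]; congr 1; omega
    simp only [e, F, show k - (j + 1) = k - 1 - j by omega, this]
    omega
  refine ⟨fun i => i + e i, fun i j hij => add_lt_add_of_lt_of_le hij (he hij.le),
    fun i => Nat.add_le_add_left (min_le_left _ _) _, ?_⟩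
  rw [sum_add_distrib, add_comm, Fin.sum_univ_eq_sum_range e, sum_congr rfl fun j hj =>
    htele j (mem_range.1 hj), sum_range_tsub hF]
  simp [F, Nat.sub_eq_zero_of_le h]

theorem coeff_sum_X_sub_C_pow_sub_one_mul_det_vandermonde_X_ne_zero {p : ℕ} [Fact p.Prime]
    {k : ℕ} (t : ZMod p) (d : Fin k →₀ ℕ) (hd : d.degree = p - 1 + ∑ i : Fin k, (i : ℕ))
    (hdp : ∀ i, d i < p) (hinj : Injective d) :
    coeff d (((∑ i, X i - C t) ^ (p - 1) - 1)
      * (vandermonde (X : Fin k → MvPolynomial (Fin k) (ZMod p))).det) ≠ 0 := by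
  have hp := (Fact.out : p.Prime).two_le
  rw [coeff_sum_X_sub_C_pow_sub_one_mul_det_vandermonde_X t (by omega) d hd]
  refine left_ne_zero_of_mul (b := ∏ i, ((d i)! : ZMod p)) ?_
  rw [coeff_sum_X_pow_mul_det_vandermonde_X_mul_prod_factorial d _ hd]
  refine mul_ne_zero ?_ (det_vandermonde_ne_zero_iff.2 fun i j hij => hinj ?_)
  · rw [Ne, ZMod.natCast_eq_zero_iff, Nat.Prime.dvd_factorial Fact.out]
    omega
  · rwa [ZMod.natCast_eq_natCast_iff', Nat.mod_eq_of_lt (hdp i), Nat.mod_eq_of_lt (hdp j)] at hij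

theorem exists_subset_card_eq_sum_eq {p : ℕ} [Fact p.Prime] (B : Finset (ZMod p)) {k : ℕ}
    (h : p - 1 ≤ k * (#B - k)) (t : ZMod p) : ∃ Z ⊆ B, #Z = k ∧ ∑ z ∈ Z, z = t := by
  classical
  have hBp : #B ≤ p := (card_le_univ B).trans (ZMod.card p).le
  have hkB : k < #B := by
    by_contra! hBk
    rw [Nat.sub_eq_zero_of_le hBk, mul_zero] at h
    have := (Fact.out : p.Prime).two_le
    omega
  obtain ⟨m, hm_mono, hm_le, hm_sum⟩ := exists_strictMono_sum_eq h
  have hmB : ∀ i, m i + 1 ≤ #B := fun i => by have := hm_le i; have := i.isLt; omega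
  choose S hSB hScard using fun i => exists_subset_card_eq (hmB i)
  set d : Fin k →₀ ℕ := Finsupp.equivFunOnFinite.symm m
  have hd : d.degree = p - 1 + ∑ i : Fin k, (i : ℕ) := by
    rw [Finsupp.degree_eq_sum]; simpa [d] using hm_sum
  set g := ((∑ i, X i - C t) ^ (p - 1) - 1)
    * (vandermonde (X : Fin k → MvPolynomial (Fin k) (ZMod p))).det
  have hcoeff : coeff d g ≠ 0 :=
    coeff_sum_X_sub_C_pow_sub_one_mul_det_vandermonde_X_ne_zero t d hd
      (fun i => by have := hmB i; simp only [d, Finsupp.coe_equivFunOnFinite_symm]; omega)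
      (by simpa [d] using hm_mono.injective)
  have hdeg : g.totalDegree = d.degree :=
    le_antisymm (hd ▸ totalDegree_sum_X_sub_C_pow_sub_one_mul_det_vandermonde_X_le t _)
      (le_totalDegree (mem_support_iff.2 hcoeff))
  obtain ⟨z, hzS, hz⟩ := combinatorial_nullstellensatz_exists_eval_nonzero g d hcoeff hdeg S
    fun i => by simp [d, hScard]
  by_contra! hno
  refine hz ?_
  simpa [g, ZMod.card] using eval_sum_X_sub_C_pow_sub_one_mul_det_vandermonde_X_eq_zero z
    fun hinj hzt => hno (univ.image z) (image_subset_iff.2 fun i _ => hSB i (hzS i))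
      (by simp [card_image_of_injective _ hinj]) (by rwa [sum_image fun i _ j _ hij => hinj hij])

theorem exists_subset_card_eq_sum_eq_of_injective {α : Type*} [DecidableEq α] {p : ℕ}
    [Fact p.Prime] {g : α → ZMod p} (hg : Injective g) (A : Finset α) {k : ℕ}
    (h : p - 1 ≤ k * (#A - k)) (t : ZMod p) :
    ∃ C ⊆ A, #C = k ∧ ∑ x ∈ C, g x = t := by
  obtain ⟨Z, hZA, hZ, hZt⟩ :=
    exists_subset_card_eq_sum_eq (A.image g) (by rwa [card_image_of_injective _ hg]) t
  obtain ⟨C, hCA, rfl⟩ := subset_image_iff.1 hZA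
  refine ⟨C, hCA, ?_, ?_⟩
  · rwa [card_image_of_injective _ hg] at hZ
  · rwa [sum_image fun x _ y _ hxy => hg hxy] at hZt

theorem four_le_card_symmDiff_of_sum_eq {α G : Type*} [DecidableEq α] [AddCancelCommMonoid G]
    {g : α → G} (hg : Injective g) {S T : Finset α} (hcard : #S = #T)
    (hsum : ∑ x ∈ S, g x = ∑ x ∈ T, g x) (hne : S ≠ T) : 4 ≤ #(symmDiff S T) := by
  have hsdiff : #(T \ S) = #(S \ T) := (card_sdiff_comm hcard).symm
  have hsymm : #(symmDiff S T) = 2 * #(S \ T) := by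
    rw [symmDiff_def, sup_eq_union, card_union_of_disjoint disjoint_sdiff_sdiff, hsdiff]
    ring
  have hpos : 0 < #(S \ T) :=
    card_pos.2 (sdiff_nonempty.2 fun hST => hne (eq_of_subset_of_card_le hST hcard.ge))
  suffices #(S \ T) ≠ 1 by omega
  intro h1
  obtain ⟨a, ha⟩ := card_eq_one.1 h1
  obtain ⟨b, hb⟩ := card_eq_one.1 (hsdiff.trans h1)
  have hab : g a = g b := by
    have hS := sum_inter_add_sum_sdiff S T g
    have hT := sum_inter_add_sum_sdiff T S g
    rw [ha, sum_singleton] at hS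
    rw [hb, sum_singleton, inter_comm] at hT
    exact add_left_cancel (hS.trans (hsum.trans hT.symm))
  have haS : a ∈ S \ T := ha ▸ mem_singleton_self a
  have hbT : b ∈ T \ S := hb ▸ mem_singleton_self b
  exact (mem_sdiff.1 haS).2 (hg hab ▸ (mem_sdiff.1 hbT).1)

theorem le_mul_sub_of_sqrt_le {a k n : ℕ} (hk : √(a : ℝ) ≤ k)
    (hn : (k : ℝ) ≤ n - √(a : ℝ)) : a ≤ k * (n - k) := by
  have hkn : k ≤ n := by exact_mod_cast hn.trans (sub_le_self _ (Real.sqrt_nonneg _))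
  rw [← Nat.cast_le (α := ℝ), Nat.cast_mul, Nat.cast_sub hkn]
  calc (a : ℝ) = √(a : ℝ) * √(a : ℝ) := (Real.mul_self_sqrt a.cast_nonneg).symm
    _ ≤ k * ((n : ℝ) - k) :=
      mul_le_mul hk (by linarith) (Real.sqrt_nonneg _) (Nat.cast_nonneg _)

/-- Lemma 5 of the paper: for `N > 3` and `k ≥ √(8N − 15)` there is a constant-weight
code `C` of `(k+1)`-element subsets of `[N]` with pairwise symmetric difference of
size at least `4`, such that whenever `n + m = N` and `k ≤ n − √(8N − 15)`, for every
`m`-element set `Y ⊆ [N]` and `y ∈ Y` there is a `k`-element set `C ⊆ [N] ∖ Y` with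
`C ∪ {y} ∈ C`. -/
theorem exists_constant_weight_code (N k : ℕ) (hN : 3 < N)
    (hk : Real.sqrt (8 * N - 15) ≤ (k : ℝ)) :
    ∃ 𝒞 : Set (Finset (Fin N)),
      (∀ S ∈ 𝒞, S.card = k + 1) ∧
      (∀ S ∈ 𝒞, ∀ T ∈ 𝒞, S ≠ T → 4 ≤ (symmDiff S T).card) ∧
      (∀ n m : ℕ, n + m = N → (k : ℝ) ≤ (n : ℝ) - Real.sqrt (8 * N - 15) →
        ∀ Y : Finset (Fin N), Y.card = m → ∀ y ∈ Y,
          ∃ C : Finset (Fin N), C.card = k ∧ Disjoint C Y ∧ insert y C ∈ 𝒞) := by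
  classical
  obtain ⟨p, hp, hNp, hpN⟩ := Nat.exists_prime_lt_and_le_two_mul (N - 1) (by omega)
  have := Fact.mk hp
  have hg : Injective fun x : Fin N => ((x : ℕ) : ZMod p) := fun a b hab => by
    rw [ZMod.natCast_eq_natCast_iff', Nat.mod_eq_of_lt (by omega),
      Nat.mod_eq_of_lt (by omega)] at hab
    exact Fin.ext hab
  have hcast : (((8 * N - 15 : ℕ) : ℝ)) = 8 * N - 15 := by
    push_cast [Nat.cast_sub (by omega : 15 ≤ 8 * N)]; rfl
  refine ⟨{S | #S = k + 1 ∧ ∑ x ∈ S, ((x : ℕ) : ZMod p) = 0}, fun S hS => hS.1,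
    fun S hS T hT => four_le_card_symmDiff_of_sum_eq hg (hS.1.trans hT.1.symm)
      (hS.2.trans hT.2.symm), ?_⟩
  intro n m hnm hkn Y hY y hy
  have hcov : p - 1 ≤ k * (#Yᶜ - k) := by
    have := le_mul_sub_of_sqrt_le (a := 8 * N - 15) (hcast ▸ hk) (hcast ▸ hkn)
    rw [card_compl, Fintype.card_fin, hY, show N - m = n by omega]
    omega
  obtain ⟨C, hCY, hC, hCsum⟩ :=
    exists_subset_card_eq_sum_eq_of_injective hg Yᶜ hcov (-((y : ℕ) : ZMod p))
  have hyC : y ∉ C := fun h => mem_compl.1 (hCY h) hy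
  exact ⟨C, hC, subset_compl_iff_disjoint_right.1 hCY, by rw [card_insert_of_notMem hyC, hC],
    by rw [sum_insert hyC, hCsum, add_neg_cancel]⟩
end

section
/- Let n, l ∈ ℕ with n ≥ 5 and 1 ≤ l ≤ n − 3, and let X and Y be disjoint sets with |X| = n. Let g be a function from the l-element subsets of X to X ∪ Y such that: (i) for every l-element set A ⊆ X, g(A) ∉ A; and (ii) for all l-element sets A, B ⊆ X with |A △ B| = 2 and g(A) ≠ g(B), at least one of {g(A)} = B ∖ A and {g(B)} = A ∖ B holds. Then there exists y ∈ X ∪ Y such that g(A) = y for every l-element subset A of X ∖ {y}. -/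
/-!
Fix an `l`-set `S ⊆ X` and look at the map `x ↦ g (S ∪ {x})` on the at least four points of
`X ∖ S`. The exchange condition says that two such points either have the same image or one
is sent to the other, and this forces the map to be a star: all points other than some centre
`g' S` are sent to `g' S`. The centre map `g'` satisfies the exchange condition one level down,
so by induction on `l` it is constant, equal to some `y`, on the `l`-subsets of `X ∖ {y}`; every
`(l + 1)`-subset `A` of `X ∖ {y}` is `S ∪ {x}` with `g' S = y ≠ x`, whence `g A = y`.
-/

open Finset

section

variable {α : Type*}

def PairwiseAgreeOrPoint (W : Finset α) (v : α → α) : Prop :=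
  (W : Set α).Pairwise fun x y => v x = v y ∨ v x = y ∨ v y = x

namespace PairwiseAgreeOrPoint

variable {W : Finset α} {v : α → α}

lemma apply_eq_or_eq (hv : PairwiseAgreeOrPoint W v) {a x : α} (ha : a ∈ W) (hx : x ∈ W)
    (hxa : x ≠ a) (hxv : x ≠ v a) : v x = v a ∨ v x = a := by
  rcases hv ha hx hxa.symm with h | h | h
  · exact Or.inl h.symm
  · exact absurd h.symm hxv
  · exact Or.inr h

lemma apply_eq_of_two_apply_eq (hv : PairwiseAgreeOrPoint W v) {c d p : α} (hc : c ∈ W)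
    (hd : d ∈ W) (hcd : c ≠ d) (hcp : c ≠ p) (hdp : d ≠ p) (hvc : v c = p) (hvd : v d = p) :
    ∀ x ∈ W, x ≠ p → v x = p := by
  intro x hx hxp
  rcases eq_or_ne x c with rfl | hxc
  · exact hvc
  rcases eq_or_ne x d with rfl | hxd
  · exact hvd
  have := hv.apply_eq_or_eq hc hx hxc (hvc ▸ hxp)
  have := hv.apply_eq_or_eq hd hx hxd (hvd ▸ hxp)
  grind

theorem exists_center [DecidableEq α] (hv : PairwiseAgreeOrPoint W v) (hW : 4 ≤ #W) :
    ∃ p, ∀ x ∈ W, x ≠ p → v x = p := by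
  obtain ⟨a, ha⟩ := card_pos.1 (by omega : 0 < #W)
  by_cases hfix : v a = a
  · refine ⟨a, fun x hx hxa => ?_⟩
    simpa [hfix] using hv.apply_eq_or_eq ha hx hxa (by rwa [hfix])
  have hrest : 1 < #(W \ {a, v a}) := by
    have := le_card_sdiff {a, v a} W
    have : #{a, v a} ≤ 2 := card_le_two
    omega
  -- Points outside `{a, v a}` are sent into `{a, v a}`, so two of them, or one of them and `a`,
  -- share an image, and two points with a common image force the star.
  obtain ⟨c, hc, d, hd, hcd⟩ := one_lt_card.1 hrest
  simp only [mem_sdiff, mem_insert, mem_singleton, not_or] at hc hd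
  obtain ⟨hcW, hca, hcv⟩ := hc
  obtain ⟨hdW, hda, hdv⟩ := hd
  rcases hv.apply_eq_or_eq ha hcW hca hcv with hvc | hvc
  · exact ⟨v a, hv.apply_eq_of_two_apply_eq ha hcW (Ne.symm hca) (Ne.symm hfix) hcv rfl hvc⟩
  rcases hv.apply_eq_or_eq ha hdW hda hdv with hvd | hvd
  · exact ⟨v a, hv.apply_eq_of_two_apply_eq ha hdW (Ne.symm hda) (Ne.symm hfix) hdv rfl hvd⟩
  exact ⟨a, hv.apply_eq_of_two_apply_eq hcW hdW hcd hca hda hvc hvd⟩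

end PairwiseAgreeOrPoint

variable [DecidableEq α]

lemma Finset.card_sdiff_eq_one_of_card_symmDiff_eq_two {A B : Finset α} (hAB : #A = #B)
    (h : #(symmDiff A B) = 2) : #(A \ B) = 1 := by
  rw [symmDiff_def, sup_eq_union, card_union_of_disjoint disjoint_sdiff_sdiff,
    ← card_sdiff_comm hAB] at h
  omega

def SwapCompatible (X : Finset α) (l : ℕ) (g : Finset α → α) : Prop :=
  ∀ A ∈ X.powersetCard l, ∀ B ∈ X.powersetCard l, #(symmDiff A B) = 2 → g A ≠ g B →
    B \ A = {g A} ∨ A \ B = {g B}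

def IsCenterMap (X : Finset α) (l : ℕ) (g g' : Finset α → α) : Prop :=
  ∀ S ∈ X.powersetCard l, ∀ x ∈ X \ S, x ≠ g' S → g (insert x S) = g' S

section

variable {X Z : Finset α} {l : ℕ} {g g' : Finset α → α}

lemma SwapCompatible.pairwiseAgreeOrPoint (hg : SwapCompatible X (l + 1) g) {S : Finset α}
    (hS : S ∈ X.powersetCard l) : PairwiseAgreeOrPoint (X \ S) fun x => g (insert x S) := by
  intro x hx x' hx' hne
  rw [mem_coe, mem_sdiff] at hx hx'
  rw [mem_powersetCard] at hS
  by_cases heq : g (insert x S) = g (insert x' S)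
  · exact Or.inl heq
  have hmem : ∀ z ∈ X \ S, insert z S ∈ X.powersetCard (l + 1) := fun z hz => by
    rw [mem_sdiff] at hz
    exact mem_powersetCard.2 ⟨insert_subset hz.1 hS.1, by rw [card_insert_of_notMem hz.2, hS.2]⟩
  have hsymm : #(symmDiff (insert x S) (insert x' S)) = 2 := by
    rw [symmDiff_def, sup_eq_union, insert_sdiff_insert' hne hx.2,
      insert_sdiff_insert' hne.symm hx'.2, ← insert_eq, card_pair hne]
  rcases hg _ (hmem x (mem_sdiff.2 hx)) _ (hmem x' (mem_sdiff.2 hx')) hsymm heq with h | h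
  · rw [insert_sdiff_insert' hne.symm hx'.2] at h
    exact Or.inr (Or.inl (singleton_injective h).symm)
  · rw [insert_sdiff_insert' hne hx.2] at h
    exact Or.inr (Or.inr (singleton_injective h).symm)

lemma SwapCompatible.exists_isCenterMap (hl : l + 4 ≤ #X) (hg : SwapCompatible X (l + 1) g) :
    ∃ g', IsCenterMap X l g g' := by
  have hcenter : ∀ S, ∃ p, S ∈ X.powersetCard l →
      ∀ x ∈ X \ S, x ≠ p → g (insert x S) = p := by
    intro S
    by_cases hS : S ∈ X.powersetCard l
    · obtain ⟨p, hp⟩ := (hg.pairwiseAgreeOrPoint hS).exists_center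
        (by rw [card_sdiff_of_subset (mem_powersetCard.1 hS).1, (mem_powersetCard.1 hS).2]; omega)
      exact ⟨p, fun _ => hp⟩
    · exact ⟨g S, fun h => absurd h hS⟩
  choose g' hg' using hcenter
  exact ⟨g', hg'⟩

lemma IsCenterMap.swapCompatible (hg' : IsCenterMap X l g g') : SwapCompatible X l g' := by
  intro S hS T hT hST hne
  rw [mem_powersetCard] at hS hT
  have hcard : #S = #T := hS.2.trans hT.2.symm
  obtain ⟨s, hs⟩ := card_eq_one.1 (card_sdiff_eq_one_of_card_symmDiff_eq_two hcard hST)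
  obtain ⟨t, ht⟩ := card_eq_one.1
    (card_sdiff_eq_one_of_card_symmDiff_eq_two hcard.symm (symmDiff_comm S T ▸ hST))
  have hsS : s ∈ S \ T := hs ▸ mem_singleton_self s
  have htT : t ∈ T \ S := ht ▸ mem_singleton_self t
  rw [mem_sdiff] at hsS htT
  rw [hs, ht]
  by_contra! h
  have hunion : insert t S = insert s T := by
    rw [insert_eq, insert_eq, ← hs, ← ht, sdiff_union_self_eq_union, sdiff_union_self_eq_union,
      union_comm]
  have hgS := hg' S (mem_powersetCard.2 hS) t (mem_sdiff.2 ⟨hT.1 htT.1, htT.2⟩)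
    fun hts => h.1 (hts ▸ rfl)
  have hgT := hg' T (mem_powersetCard.2 hT) s (mem_sdiff.2 ⟨hS.1 hsS.1, hsS.2⟩)
    fun hst => h.2 (hst ▸ rfl)
  exact hne (hgS.symm.trans (hunion ▸ hgT))

lemma IsCenterMap.mem_of_forall_mem (hg' : IsCenterMap X l g g') (hl : l + 2 ≤ #X)
    (hmem : ∀ A ∈ X.powersetCard (l + 1), g A ∈ Z) : ∀ S ∈ X.powersetCard l, g' S ∈ Z := by
  intro S hS
  have hSX := mem_powersetCard.1 hS
  obtain ⟨x, hx, hxS⟩ := exists_mem_ne (s := X \ S)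
    (by rw [card_sdiff_of_subset hSX.1]; omega) (g' S)
  rw [← hg' S hS x hx hxS]
  rw [mem_sdiff] at hx
  exact hmem _ (mem_powersetCard.2
    ⟨insert_subset hx.1 hSX.1, by rw [card_insert_of_notMem hx.2, hSX.2]⟩)

lemma IsCenterMap.apply_eq_of_forall_eq (hg' : IsCenterMap X l g g') {y : α}
    (hy : ∀ S ∈ (X \ {y}).powersetCard l, g' S = y) :
    ∀ A ∈ (X \ {y}).powersetCard (l + 1), g A = y := by
  intro A hA
  rw [mem_powersetCard] at hA
  obtain ⟨x, hx⟩ := card_pos.1 (by omega : 0 < #A)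
  have hS : A.erase x ∈ (X \ {y}).powersetCard l :=
    mem_powersetCard.2 ⟨(erase_subset x A).trans hA.1, by rw [card_erase_of_mem hx, hA.2]; rfl⟩
  have hxX := mem_sdiff.1 (hA.1 hx)
  rw [← insert_erase hx, ← hy _ hS]
  refine hg' _ (powersetCard_mono sdiff_subset hS) x
    (mem_sdiff.2 ⟨hxX.1, notMem_erase x A⟩) ?_
  rw [hy _ hS]
  simpa using hxX.2

theorem SwapCompatible.exists_const (hl : l ≤ #X - 3)
    (hmem : ∀ A ∈ X.powersetCard l, g A ∈ Z) (hg : SwapCompatible X l g) :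
    ∃ y ∈ Z, ∀ A ∈ (X \ {y}).powersetCard l, g A = y := by
  induction l generalizing g with
  | zero =>
    simp only [powersetCard_zero, mem_singleton, forall_eq] at hmem ⊢
    exact ⟨g ∅, hmem, rfl⟩
  | succ l ih =>
    obtain ⟨g', hg'⟩ := hg.exists_isCenterMap (by omega)
    obtain ⟨y, hy, hconst⟩ := ih (by omega) (hg'.mem_of_forall_mem (by omega) hmem)
      hg'.swapCompatible
    exact ⟨y, hy, hg'.apply_eq_of_forall_eq hconst⟩

end

end

theorem constant_on_avoiding_sets_general {α : Type*} [DecidableEq α]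
    (n l : ℕ) (hl2 : l ≤ n - 3)
    (X Y : Finset α) (hX : X.card = n)
    (g : Finset α → α)
    (hmem : ∀ A : Finset α, A ⊆ X → A.card = l → g A ∈ X ∪ Y)
    (hswap : ∀ A B : Finset α, A ⊆ X → B ⊆ X → A.card = l → B.card = l →
      (symmDiff A B).card = 2 → g A ≠ g B →
      B \ A = {g A} ∨ A \ B = {g B}) :
    ∃ y ∈ X ∪ Y, ∀ A : Finset α, A ⊆ X \ {y} → A.card = l → g A = y := by
  subst hX
  have hg : SwapCompatible X l g := fun A hA B hB =>
    hswap A B (mem_powersetCard.1 hA).1 (mem_powersetCard.1 hB).1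
      (mem_powersetCard.1 hA).2 (mem_powersetCard.1 hB).2
  obtain ⟨y, hy, hconst⟩ :=
    hg.exists_const hl2 fun A hA => hmem A (mem_powersetCard.1 hA).1 (mem_powersetCard.1 hA).2
  exact ⟨y, hy, fun A hA hAl => hconst A (mem_powersetCard.2 ⟨hA, hAl⟩)⟩

/-- Lemma 9 of the paper: let `n ≥ 5`, `1 ≤ l ≤ n − 3`, let `X` and `Y` be disjoint
sets with `|X| = n`, and let `g` assign to each `l`-element subset `A ⊆ X` an element
of `X ∪ Y` with `g(A) ∉ A`, such that for all `l`-element `A, B ⊆ X` with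
`|A △ B| = 2` and `g(A) ≠ g(B)`, at least one of `{g(A)} = B ∖ A` and
`{g(B)} = A ∖ B` holds. Then there is `y ∈ X ∪ Y` such that `g(A) = y` for every
`l`-element subset `A` of `X ∖ {y}`. -/
theorem constant_on_avoiding_sets {α : Type*} [DecidableEq α]
    (n l : ℕ) (hn : 5 ≤ n) (hl1 : 1 ≤ l) (hl2 : l ≤ n - 3)
    (X Y : Finset α) (hXY : Disjoint X Y) (hX : X.card = n)
    (g : Finset α → α)
    (hmem : ∀ A : Finset α, A ⊆ X → A.card = l → g A ∈ X ∪ Y)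
    (hnotin : ∀ A : Finset α, A ⊆ X → A.card = l → g A ∉ A)
    (hswap : ∀ A B : Finset α, A ⊆ X → B ⊆ X → A.card = l → B.card = l →
      (symmDiff A B).card = 2 → g A ≠ g B →
      B \ A = {g A} ∨ A \ B = {g B}) :
    ∃ y ∈ X ∪ Y, ∀ A : Finset α, A ⊆ X \ {y} → A.card = l → g A = y :=
  constant_on_avoiding_sets_general n l hl2 X Y hX g hmem hswap
end

section
/- Let m ≥ 2, n ≥ 1 and 0 ≤ k ≤ n − 1 be integers, and let φ: Q_n → Q_{n+m} be an injective order-preserving map (A ⊆ B implies φ(A) ⊆ φ(B)) such that no set in the image of φ has cardinality belonging to {k} ∪ {k+3, k+4, …, k+m+1}. Then for every A ⊆ [n]: |φ(A)| = |A| if |A| ≤ k − 1; |φ(A)| = |A| + 1 if k ≤ |A| ≤ k + 1; and |φ(A)| = |A| + m if |A| ≥ k + 2. -/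
/-!
Since `φ` is strictly monotone, climbing a maximal chain from `A` to `B ⊇ A` raises `|φ(·)|`
by at least `|B| - |A|`, so the excess `|φ(A)| - |A|` is monotone, nonnegative (start at `∅`)
and at most `m` (end at `[n]`). On the layers `k` and `k + 1` the forbidden cardinalities then
leave only the values `k + 1, k + 2`, and comparing a `k`-set with a `(k + 1)`-superset forces
the excess to be exactly `1` on both layers. Above, a `(k + 2)`-set has image of size at least
`k + 3`, hence beyond the forbidden window, i.e. excess `m`; below, a `(k - 1)`-set under a
`k`-set has image of size at most `k`, hence `k - 1`, i.e. excess `0`. Monotonicity of the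
excess propagates these values to all smaller, resp. larger, sets.
-/

open Finset

section StrictMonoPowerset

variable {α β : Type*} {φ : Finset α → Finset β}

theorem StrictMono.card_apply_add_card_le (hφ : StrictMono φ) {A B : Finset α} (hAB : A ⊆ B) :
    #(φ A) + #B ≤ #(φ B) + #A := by
  classical
  induction B using Finset.strongInduction with
  | H B ih =>
    obtain rfl | hne := eq_or_ne A B
    · rfl
    obtain ⟨x, hxB, hxA⟩ := exists_of_ssubset (hAB.ssubset_of_ne hne)
    have hsub : B.erase x ⊂ B := erase_ssubset hxB
    have hchain := ih _ hsub (subset_erase.2 ⟨hAB, hxA⟩)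
    have hstep := card_lt_card (hφ hsub)
    have hcard := card_erase_add_one hxB
    omega

theorem StrictMono.card_le_card_apply (hφ : StrictMono φ) (A : Finset α) : #A ≤ #(φ A) := by
  have := hφ.card_apply_add_card_le (empty_subset A)
  rw [card_empty] at this
  omega

theorem StrictMono.card_apply_add_card_le_card [Fintype α] [Fintype β] (hφ : StrictMono φ)
    (A : Finset α) : #(φ A) + Fintype.card α ≤ Fintype.card β + #A := by
  have := hφ.card_apply_add_card_le (subset_univ A)
  have := card_le_univ (φ univ)
  rw [card_univ] at *
  omega

end StrictMonoPowerset

section AvoidingCardinalities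

variable {α β : Type*} [Fintype α] [Fintype β] {φ : Finset α → Finset β} {m k : ℕ}

theorem card_apply_eq_of_ssubset_of_card_eq (hφ : StrictMono φ)
    (hcard : Fintype.card β ≤ Fintype.card α + m)
    (havoid : ∀ A : Finset α, #(φ A) ≠ k ∧
      ∀ i : ℕ, k + 3 ≤ i → i ≤ k + m + 1 → #(φ A) ≠ i)
    {B C : Finset α} (hBC : B ⊂ C) (hB : #B = k) (hC : #C = k + 1) :
    #(φ B) = k + 1 ∧ #(φ C) = k + 2 := by
  have hlt := card_lt_card (hφ hBC)
  have hBk := (havoid B).1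
  have hB_low := hφ.card_le_card_apply B
  have hC_up := hφ.card_apply_add_card_le_card C
  have hC_out := (havoid C).2 #(φ C)
  omega

theorem card_apply_eq_succ_of_card_eq (hφ : StrictMono φ)
    (hcard : Fintype.card β ≤ Fintype.card α + m)
    (havoid : ∀ A : Finset α, #(φ A) ≠ k ∧
      ∀ i : ℕ, k + 3 ≤ i → i ≤ k + m + 1 → #(φ A) ≠ i)
    (hk : k < Fintype.card α)
    {A : Finset α} (hA : #A = k) : #(φ A) = k + 1 := by
  obtain ⟨C, hAC, hC⟩ := exists_superset_card_eq (s := A) (n := k + 1) (by omega) hk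
  exact (card_apply_eq_of_ssubset_of_card_eq hφ hcard havoid
    (hAC.ssubset_of_ne (by rintro rfl; omega)) hA hC).1

theorem card_apply_eq_add_two_of_card_eq_succ (hφ : StrictMono φ)
    (hcard : Fintype.card β ≤ Fintype.card α + m)
    (havoid : ∀ A : Finset α, #(φ A) ≠ k ∧
      ∀ i : ℕ, k + 3 ≤ i → i ≤ k + m + 1 → #(φ A) ≠ i)
    {A : Finset α} (hA : #A = k + 1) : #(φ A) = k + 2 := by
  obtain ⟨B, hBA, hB⟩ := exists_subset_card_eq (s := A) (n := k) (by omega)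
  exact (card_apply_eq_of_ssubset_of_card_eq hφ hcard havoid
    (hBA.ssubset_of_ne (by rintro rfl; omega)) hB hA).2

theorem card_apply_eq_add_of_card_eq_add_two (hφ : StrictMono φ)
    (hcard : Fintype.card β ≤ Fintype.card α + m)
    (havoid : ∀ A : Finset α, #(φ A) ≠ k ∧
      ∀ i : ℕ, k + 3 ≤ i → i ≤ k + m + 1 → #(φ A) ≠ i)
    {A : Finset α} (hA : #A = k + 2) :
    #(φ A) = k + 2 + m := by
  obtain ⟨C, hCA, hC⟩ := exists_subset_card_eq (s := A) (n := k + 1) (by omega)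
  have hC_img := card_apply_eq_add_two_of_card_eq_succ hφ hcard havoid hC
  have hlt := card_lt_card (hφ (hCA.ssubset_of_ne (by rintro rfl; omega)))
  have hA_up := hφ.card_apply_add_card_le_card A
  have hA_out := (havoid A).2 #(φ A)
  omega

theorem card_apply_eq_of_card_lt (hφ : StrictMono φ)
    (hcard : Fintype.card β ≤ Fintype.card α + m)
    (havoid : ∀ A : Finset α, #(φ A) ≠ k ∧
      ∀ i : ℕ, k + 3 ≤ i → i ≤ k + m + 1 → #(φ A) ≠ i)
    (hk : k < Fintype.card α)
    {A : Finset α} (hA : #A < k) : #(φ A) = #A := by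
  obtain ⟨B, hAB, hB⟩ := exists_superset_card_eq (n := k) hA.le hk.le
  obtain ⟨W, hAW, hWB, hW⟩ := exists_subsuperset_card_eq (n := k - 1) hAB (by omega) (by omega)
  have hB_img := card_apply_eq_succ_of_card_eq hφ hcard havoid hk hB
  have hlt := card_lt_card (hφ (hWB.ssubset_of_ne (by rintro rfl; omega)))
  have hWk := (havoid W).1
  have hchain := hφ.card_apply_add_card_le hAW
  have hA_low := hφ.card_le_card_apply A
  omega

theorem card_apply_eq_add_of_add_two_le_card (hφ : StrictMono φ)
    (hcard : Fintype.card β ≤ Fintype.card α + m)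
    (havoid : ∀ A : Finset α, #(φ A) ≠ k ∧
      ∀ i : ℕ, k + 3 ≤ i → i ≤ k + m + 1 → #(φ A) ≠ i)
    {A : Finset α} (hA : k + 2 ≤ #A) : #(φ A) = #A + m := by
  obtain ⟨D, hDA, hD⟩ := exists_subset_card_eq hA
  have hD_img := card_apply_eq_add_of_card_eq_add_two hφ hcard havoid hD
  have hchain := hφ.card_apply_add_card_le hDA
  have hA_up := hφ.card_apply_add_card_le_card A
  omega

end AvoidingCardinalities

theorem image_cardinalities_of_weak_embedding_general (m n k : ℕ)
    (hn : 1 ≤ n) (hk : k ≤ n - 1)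
    (φ : Finset (Fin n) → Finset (Fin (n + m)))
    (hinj : Function.Injective φ)
    (hmono : ∀ A B : Finset (Fin n), A ⊆ B → φ A ⊆ φ B)
    (havoid : ∀ A : Finset (Fin n), (φ A).card ≠ k ∧
      ∀ i : ℕ, k + 3 ≤ i → i ≤ k + m + 1 → (φ A).card ≠ i) :
    ∀ A : Finset (Fin n),
      (A.card < k → (φ A).card = A.card) ∧
      (k ≤ A.card → A.card ≤ k + 1 → (φ A).card = A.card + 1) ∧
      (k + 2 ≤ A.card → (φ A).card = A.card + m) := by
  have hφ : StrictMono φ := Monotone.strictMono_of_injective (fun A B ↦ hmono A B) hinj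
  have hcard : Fintype.card (Fin (n + m)) ≤ Fintype.card (Fin n) + m := by simp
  have hk' : k < Fintype.card (Fin n) := by rw [Fintype.card_fin]; omega
  intro A
  refine ⟨card_apply_eq_of_card_lt hφ hcard havoid hk', fun hkA hAk ↦ ?_,
    card_apply_eq_add_of_add_two_le_card hφ hcard havoid⟩
  obtain hA | hA : #A = k ∨ #A = k + 1 := by omega
  · rw [card_apply_eq_succ_of_card_eq hφ hcard havoid hk' hA, hA]
  · rw [card_apply_eq_add_two_of_card_eq_succ hφ hcard havoid hA, hA]

/-- If `φ : Q_n → Q_{n+m}` is an injective order-preserving map (with `m ≥ 2`,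
`1 ≤ n`, `0 ≤ k ≤ n − 1`) such that no set in its image has cardinality in
`{k} ∪ {k+3, k+4, …, k+m+1}`, then `|φ(A)| = |A|` if `|A| < k` (i.e. `|A| ≤ k − 1`),
`|φ(A)| = |A| + 1` if `k ≤ |A| ≤ k + 1`, and `|φ(A)| = |A| + m` if `|A| ≥ k + 2`. -/
theorem image_cardinalities_of_weak_embedding (m n k : ℕ)
    (hm : 2 ≤ m) (hn : 1 ≤ n) (hk : k ≤ n - 1)
    (φ : Finset (Fin n) → Finset (Fin (n + m)))
    (hinj : Function.Injective φ)
    (hmono : ∀ A B : Finset (Fin n), A ⊆ B → φ A ⊆ φ B)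
    (havoid : ∀ A : Finset (Fin n), (φ A).card ≠ k ∧
      ∀ i : ℕ, k + 3 ≤ i → i ≤ k + m + 1 → (φ A).card ≠ i) :
    ∀ A : Finset (Fin n),
      (A.card < k → (φ A).card = A.card) ∧
      (k ≤ A.card → A.card ≤ k + 1 → (φ A).card = A.card + 1) ∧
      (k + 2 ≤ A.card → (φ A).card = A.card + m) :=
  image_cardinalities_of_weak_embedding_general m n k hn hk φ hinj hmono havoid
end

section
/- There exists n₀ ∈ ℕ such that for all integers n ≥ n₀ and all integers m ≥ 3, there exists a partition of the Boolean lattice Q_{n+m} into families B and R such that B contains no weak copy of Q_m and R contains no weak copy of Q_n. -/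
set_option maxHeartbeats 1000000


/-- A family `F` of subsets of `[N]` (modeled as `Finset (Fin N)`) contains a weak copy
of the Boolean lattice `Q_m`. -/
def ContainsWeakCopy (m N : ℕ) (F : Set (Finset (Fin N))) : Prop :=
  ∃ φ : Finset (Fin m) → Finset (Fin N),
    Function.Injective φ ∧ (∀ A, φ A ∈ F) ∧
    ∀ A B : Finset (Fin m), A ⊆ B → φ A ⊆ φ B

namespace WRL

open Finset

attribute [local instance] Classical.propDecidable

/-- The canonical labelling of points by residues. -/
def vv {N : ℕ} (x : Fin N) : ZMod N := (x.val : ZMod N)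

/-- Sum of the labels of a finite set of points. -/
def sg {N : ℕ} (M : Finset (Fin N)) : ZMod N := ∑ x ∈ M, vv x

/-- Autocorrelation of a set of residues at shift `δ`. -/
def corr {N : ℕ} (W : Finset (ZMod N)) (δ : ZMod N) : ℕ :=
  (W.filter (fun w => w - δ ∈ W)).card

/-- Number of `X`-subsets of a set `T` (relevant when `T` has `m+1` elements). -/
def ycnt {N : ℕ} (W : Finset (ZMod N)) (T : Finset (Fin N)) : ℕ :=
  (T.filter (fun x => sg T - vv x ∈ W)).card

/-- The blue part of level `m`. -/
def XX {N : ℕ} (m : ℕ) (W : Finset (ZMod N)) : Set (Finset (Fin N)) :=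
  {M | M.card = m ∧ sg M ∈ W}

/-- The blue part of level `m+1`: sets with at most `m-1` `X`-subsets. -/
def YY {N : ℕ} (m : ℕ) (W : Finset (ZMod N)) : Set (Finset (Fin N)) :=
  {T | T.card = m + 1 ∧ ycnt W T ≤ m - 1}

/-- The blue family. -/
def BB {N : ℕ} (m : ℕ) (W : Finset (ZMod N)) : Set (Finset (Fin N)) :=
  {A | A.card ≤ m - 2} ∪ XX m W ∪ YY m W

/-- The required properties of the window set `W`. -/
def GoodW (n m : ℕ) (W : Finset (ZMod (n+m))) : Prop :=
  W.card = m + 40 ∧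
  ((∀ δ : ZMod (n+m), δ ≠ 0 → corr W δ ≤ m - 4) ∨
   (m ≤ 4 ∧ ∀ δ : ZMod (n+m), δ ≠ 0 → corr W δ ≤ 1))

lemma vv_inj {N : ℕ} : Function.Injective (vv (N := N)) := by
  intro x y h
  haveI : NeZero N := ⟨x.pos.ne'⟩
  have hx : ((x.val : ZMod N)).val = x.val := ZMod.val_natCast_of_lt x.isLt
  have hy : ((y.val : ZMod N)).val = y.val := ZMod.val_natCast_of_lt y.isLt
  have : x.val = y.val := by rw [← hx, ← hy]; exact congrArg ZMod.val h
  exact Fin.ext this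

lemma chain_card {d N : ℕ} (φ : Finset (Fin d) → Finset (Fin N))
    (hinj : Function.Injective φ) (hmono : ∀ A B : Finset (Fin d), A ⊆ B → φ A ⊆ φ B) :
    ∀ (k : ℕ) (A B : Finset (Fin d)), A ⊆ B → B.card = A.card + k →
      (φ A).card + k ≤ (φ B).card := by
  intro k
  induction k with
  | zero =>
    intro A B hAB hcard
    have : A = B := Finset.eq_of_subset_of_card_le hAB (by omega)
    subst this; omega
  | succ k ih =>
    intro A B hAB hcard
    have hne : ¬ B ⊆ A := fun h => by
      have := Finset.card_le_card h; omega
    obtain ⟨x, hxB, hxA⟩ := Finset.not_subset.mp hne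
    have hAB' : A ⊆ B.erase x := fun y hy => Finset.mem_erase.mpr ⟨fun h => hxA (h ▸ hy), hAB hy⟩
    have hc' : (B.erase x).card = A.card + k := by
      rw [Finset.card_erase_of_mem hxB]; omega
    have h1 := ih A (B.erase x) hAB' hc'
    have h2 : φ (B.erase x) ⊂ φ B := by
      refine Finset.ssubset_iff_subset_ne.mpr ⟨hmono _ _ (Finset.erase_subset _ _), ?_⟩
      intro h
      have heq : B.erase x = B := hinj h
      have : x ∈ B.erase x := by rw [heq]; exact hxB
      exact (Finset.notMem_erase x B) this
    have := Finset.card_lt_card h2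
    omega

/-- Key counting lemma: for a set `M` of size `m`, there is at most a bounded number
of points `y` outside `M` for which `M ∪ {y}` has at least `m` `X`-subsets. -/
lemma bad_count {n m : ℕ} (hm : 3 ≤ m) (W : Finset (ZMod (n+m)))
    (hW2 : (∀ δ : ZMod (n+m), δ ≠ 0 → corr W δ ≤ m - 4) ∨
           (m ≤ 4 ∧ ∀ δ : ZMod (n+m), δ ≠ 0 → corr W δ ≤ 1))
    (M : Finset (Fin (n+m))) (hM : M.card = m) :
    (Finset.univ.filter (fun y => y ∉ M ∧ m ≤ ycnt W (insert y M))).card ≤ 16 := by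
  have hpos : 0 < n + m := by
    obtain ⟨x, _⟩ := Finset.card_pos.mp (show 0 < M.card by omega)
    exact x.pos
  haveI : NeZero (n + m) := ⟨by omega⟩
  set bads := Finset.univ.filter (fun y => y ∉ M ∧ m ≤ ycnt W (insert y M)) with hbads
  set F : Fin (n+m) → Finset (Fin (n+m)) :=
    fun y => M.filter (fun x => sg (insert y M) - vv x ∈ W) with hF
  have hFy : ∀ y ∈ bads, m - 1 ≤ (F y).card := by
    intro y hy
    obtain ⟨-, hyM, hycnt⟩ := Finset.mem_filter.mp hy
    have h1 : ycnt W (insert y M) ≤ (F y).card + 1 := by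
      unfold ycnt
      rw [Finset.filter_insert]
      split
      · exact Finset.card_insert_le _ _
      · exact Nat.le_succ _
    omega
  have hsg : ∀ y, y ∉ M → sg (insert y M) = vv y + sg M := by
    intro y hyM
    exact Finset.sum_insert hyM
  have hmemM : ∀ y ∈ bads, y ∉ M := fun y hy => (Finset.mem_filter.mp hy).2.1
  rcases hW2 with hcorr | ⟨hm4, hcorr⟩
  · -- strong correlation bound: at most one bad point
    have : bads.card ≤ 1 := by
      rw [Finset.card_le_one]
      intro y₁ hy₁ y₂ hy₂
      by_contra hne
      set Δ : ZMod (n+m) := vv y₁ - vv y₂ with hΔdef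
      have hΔ : Δ ≠ 0 := sub_ne_zero.mpr (fun h => hne (vv_inj h))
      have hGcard : m - 2 ≤ (F y₁ ∩ F y₂).card := by
        have h1 := hFy y₁ hy₁
        have h2 := hFy y₂ hy₂
        have h3 := Finset.card_union_add_card_inter (F y₁) (F y₂)
        have h4 : (F y₁ ∪ F y₂).card ≤ M.card := Finset.card_le_card (Finset.union_subset
            (Finset.filter_subset _ _) (Finset.filter_subset _ _))
        omega
      have hmap : ∀ x ∈ F y₁ ∩ F y₂, sg (insert y₁ M) - vv x ∈
          W.filter (fun w => w - Δ ∈ W) := by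
        intro x hx
        obtain ⟨hx1, hx2⟩ := Finset.mem_inter.mp hx
        refine Finset.mem_filter.mpr ⟨(Finset.mem_filter.mp hx1).2, ?_⟩
        have heq : sg (insert y₁ M) - vv x - Δ = sg (insert y₂ M) - vv x := by
          rw [hsg y₁ (hmemM y₁ hy₁), hsg y₂ (hmemM y₂ hy₂), hΔdef]
          ring
        rw [heq]
        exact (Finset.mem_filter.mp hx2).2
      have hinj2 : Set.InjOn (fun x => sg (insert y₁ M) - vv x) ((F y₁ ∩ F y₂ : Finset (Fin (n+m))) : Set (Fin (n+m))) := by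
        intro a _ b _ h
        exact vv_inj (sub_right_injective h)
      have hle := Finset.card_le_card_of_injOn _ hmap hinj2
      have : corr W Δ ≤ m - 4 := hcorr Δ hΔ
      unfold corr at this
      omega
    omega
  · -- weak correlation bound but m ≤ 4
    have hex : ∀ y, ∃ pq : Fin (n+m) × Fin (n+m), y ∈ bads →
        pq.1 ∈ F y ∧ pq.2 ∈ F y ∧ pq.1 ≠ pq.2 := by
      intro y
      by_cases hy : y ∈ bads
      · have h2 : 1 < (F y).card := by have := hFy y hy; omega
        obtain ⟨a, ha, b, hb, hab⟩ := Finset.one_lt_card.mp h2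
        exact ⟨(a, b), fun _ => ⟨ha, hb, hab⟩⟩
      · exact ⟨(Classical.arbitrary _, Classical.arbitrary _), fun h => absurd h hy⟩
    choose pq hpq using hex
    have hmaps : ∀ y ∈ bads, pq y ∈ M ×ˢ M := by
      intro y hy
      obtain ⟨h1, h2, -⟩ := hpq y hy
      exact Finset.mem_product.mpr ⟨Finset.mem_of_mem_filter _ h1,
        Finset.mem_of_mem_filter _ h2⟩
    have hinj2 : Set.InjOn pq bads := by
      intro y₁ hy₁ y₂ hy₂ h
      obtain ⟨hp1, hq1, hpq1⟩ := hpq y₁ hy₁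
      obtain ⟨hp2, hq2, hpq2⟩ := hpq y₂ hy₂
      set p := (pq y₁).1 with hp
      set q := (pq y₁).2 with hq
      have hp2' : p ∈ F y₂ := by rw [hp, h]; exact hp2
      have hq2' : q ∈ F y₂ := by rw [hq, h]; exact hq2
      set Δ : ZMod (n+m) := vv q - vv p with hΔdef
      have hΔ : Δ ≠ 0 := sub_ne_zero.mpr (fun hc => hpq1 (vv_inj hc).symm)
      have hw : ∀ y', p ∈ F y' → q ∈ F y' →
          sg (insert y' M) - vv p ∈ W.filter (fun w => w - Δ ∈ W) := by
        intro y' h1 h2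
        refine Finset.mem_filter.mpr ⟨(Finset.mem_filter.mp h1).2, ?_⟩
        have heq : sg (insert y' M) - vv p - Δ = sg (insert y' M) - vv q := by
          rw [hΔdef]; ring
        rw [heq]
        exact (Finset.mem_filter.mp h2).2
      have hw1 := hw y₁ hp1 hq1
      have hw2 := hw y₂ hp2' hq2'
      have hcorr1 : (W.filter (fun w => w - Δ ∈ W)).card ≤ 1 := hcorr Δ hΔ
      have heqw : sg (insert y₁ M) - vv p = sg (insert y₂ M) - vv p := by
        have := Finset.card_le_one.mp hcorr1 _ hw1 _ hw2
        exact this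
      have heq2 : vv y₁ = vv y₂ := by
        have h3 : sg (insert y₁ M) = sg (insert y₂ M) := by
          have := heqw
          exact sub_left_injective this
        rw [hsg y₁ (hmemM y₁ hy₁), hsg y₂ (hmemM y₂ hy₂)] at h3
        exact add_right_cancel h3
      exact vv_inj heq2
    have hle := Finset.card_le_card_of_injOn _ hmaps hinj2
    have : (M ×ˢ M).card = m * m := by rw [Finset.card_product, hM]
    have : m * m ≤ 16 := by nlinarith
    omega

/-- Counting lemma: every `(m-1)`-set has many `X`-extensions. -/
lemma ext_count {n m : ℕ} (hm : 3 ≤ m) (hn : 1000000000 ≤ n) (W : Finset (ZMod (n+m)))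
    (hWc : W.card = m + 40) (C : Finset (Fin (n+m))) (hC : C.card = m - 1) :
    41 ≤ (Finset.univ.filter (fun y => y ∉ C ∧ insert y C ∈ XX m W)).card := by
  haveI : NeZero (n+m) := ⟨by omega⟩
  set g : ZMod (n+m) → Fin (n+m) := fun z => ⟨(z - sg C).val, ZMod.val_lt _⟩ with hg
  have hvvg : ∀ z, vv (g z) = z - sg C := by
    intro z
    show (((z - sg C).val : ℕ) : ZMod (n+m)) = z - sg C
    exact ZMod.natCast_rightInverse _
  have hginj : Function.Injective g := by
    intro z z' h
    have h2 : (z - sg C) = (z' - sg C) := by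
      have := congrArg vv h
      rwa [hvvg, hvvg] at this
    exact sub_left_injective h2
  have hsub : (W.image g) \ C ⊆ Finset.univ.filter (fun y => y ∉ C ∧ insert y C ∈ XX m W) := by
    intro y hy
    obtain ⟨hyim, hyC⟩ := Finset.mem_sdiff.mp hy
    obtain ⟨w, hw, rfl⟩ := Finset.mem_image.mp hyim
    refine Finset.mem_filter.mpr ⟨Finset.mem_univ _, hyC, ?_, ?_⟩
    · rw [Finset.card_insert_of_notMem hyC, hC]; omega
    · show sg (insert (g w) C) ∈ W
      have : sg (insert (g w) C) = vv (g w) + sg C := Finset.sum_insert hyC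
      rw [this, hvvg, sub_add_cancel]
      exact hw
  have h1 := Finset.card_le_card hsub
  have h2 : (W.image g).card ≤ ((W.image g) \ C).card + C.card :=
    Finset.card_le_card_sdiff_add_card
  have h3 : (W.image g).card = m + 40 := by
    rw [Finset.card_image_of_injective _ hginj, hWc]
  omega

lemma mem_BB_cases {N m : ℕ} {W : Finset (ZMod N)} {A : Finset (Fin N)} (h : A ∈ BB m W) :
    A.card ≤ m - 2 ∨ (A.card = m ∧ sg A ∈ W) ∨ (A.card = m + 1 ∧ ycnt W A ≤ m - 1) := by
  rcases h with (h | h) | h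
  · exact Or.inl h
  · exact Or.inr (Or.inl h)
  · exact Or.inr (Or.inr h)

lemma blue {n m : ℕ} (hm : 3 ≤ m) (W : Finset (ZMod (n+m))) :
    ¬ ContainsWeakCopy m (n + m) (BB m W) := by
  rintro ⟨φ, hinj, hmem, hmono⟩
  have hchain := chain_card φ hinj hmono
  set T := φ Finset.univ with hT
  -- basic cards
  have hcard_coatom : ∀ i : Fin m, ((Finset.univ : Finset (Fin m)).erase i).card = m - 1 := by
    intro i
    rw [Finset.card_erase_of_mem (Finset.mem_univ i), Finset.card_fin]
  have hlow : ∀ i : Fin m, m - 1 ≤ (φ ((Finset.univ : Finset (Fin m)).erase i)).card := by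
    intro i
    have hc : ((Finset.univ : Finset (Fin m)).erase i).card
        = (∅ : Finset (Fin m)).card + (m - 1) := by
      rw [hcard_coatom i, Finset.card_empty]
      omega
    have := hchain (m-1) ∅ _ (Finset.empty_subset _) hc
    omega
  have hstep : ∀ i : Fin m,
      (φ ((Finset.univ : Finset (Fin m)).erase i)).card + 1 ≤ T.card := by
    intro i
    have hc : (Finset.univ : Finset (Fin m)).card
        = ((Finset.univ : Finset (Fin m)).erase i).card + 1 := by
      rw [hcard_coatom i, Finset.card_fin]; omega
    exact hchain 1 _ _ (Finset.subset_univ _) hc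
  -- coatom images have card m or m+1
  have hco : ∀ i : Fin m,
      (φ ((Finset.univ : Finset (Fin m)).erase i)).card = m ∨
      (φ ((Finset.univ : Finset (Fin m)).erase i)).card = m + 1 := by
    intro i
    rcases mem_BB_cases (hmem ((Finset.univ : Finset (Fin m)).erase i)) with h | h | h
    · exact absurd (hlow i) (by omega)
    · exact Or.inl h.1
    · exact Or.inr h.1
  -- T must be in YY
  have hT1 : m + 1 ≤ T.card := by
    have h0 := hco ⟨0, by omega⟩
    have h1 := hstep ⟨0, by omega⟩
    omega
  have hTY : T.card = m + 1 ∧ ycnt W T ≤ m - 1 := by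
    rcases mem_BB_cases (show T ∈ BB m W from hmem Finset.univ) with h | h | h
    · exact absurd hT1 (by omega)
    · exact absurd hT1 (by omega)
    · exact h
  -- each coatom image is in XX
  have hcoX : ∀ i : Fin m, (φ ((Finset.univ : Finset (Fin m)).erase i)).card = m ∧
      sg (φ ((Finset.univ : Finset (Fin m)).erase i)) ∈ W := by
    intro i
    rcases mem_BB_cases (hmem ((Finset.univ : Finset (Fin m)).erase i)) with h | h | h
    · exact absurd (hlow i) (by omega)
    · exact h
    · exact absurd (hstep i) (by omega)
  -- the missing points
  have hx : ∀ i : Fin m, ∃ x : Fin (n+m),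
      x ∈ T ∧ φ ((Finset.univ : Finset (Fin m)).erase i) = T.erase x := by
    intro i
    have hsub : φ ((Finset.univ : Finset (Fin m)).erase i) ⊆ T :=
      hmono _ _ (Finset.subset_univ _)
    have hsd : (T \ φ ((Finset.univ : Finset (Fin m)).erase i)).card = 1 := by
      rw [Finset.card_sdiff_of_subset hsub, hTY.1, (hcoX i).1]; omega
    obtain ⟨x, hxe⟩ := Finset.card_eq_one.mp hsd
    have hxT : x ∈ T := by
      have : x ∈ T \ φ ((Finset.univ : Finset (Fin m)).erase i) := by
        rw [hxe]; exact Finset.mem_singleton_self x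
      exact (Finset.mem_sdiff.mp this).1
    have hxnot : x ∉ φ ((Finset.univ : Finset (Fin m)).erase i) := by
      have : x ∈ T \ φ ((Finset.univ : Finset (Fin m)).erase i) := by
        rw [hxe]; exact Finset.mem_singleton_self x
      exact (Finset.mem_sdiff.mp this).2
    refine ⟨x, hxT, ?_⟩
    have hsub2 : φ ((Finset.univ : Finset (Fin m)).erase i) ⊆ T.erase x := fun y hy =>
      Finset.mem_erase.mpr ⟨fun h => hxnot (h ▸ hy), hsub hy⟩
    refine Finset.eq_of_subset_of_card_le hsub2 ?_
    rw [Finset.card_erase_of_mem hxT, hTY.1, (hcoX i).1]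
    omega
  choose x hxT hxE using hx
  -- x is injective
  have hxinj : Function.Injective x := by
    intro i j h
    have h2 : φ ((Finset.univ : Finset (Fin m)).erase i)
        = φ ((Finset.univ : Finset (Fin m)).erase j) := by
      rw [hxE i, hxE j, h]
    have h3 := hinj h2
    by_contra hne
    have : i ∈ (Finset.univ : Finset (Fin m)).erase i := by
      rw [h3]; exact Finset.mem_erase.mpr ⟨hne, Finset.mem_univ i⟩
    exact (Finset.notMem_erase i _) this
  -- each x i is in the ycnt filter
  have hxmem : ∀ i : Fin m, x i ∈ T.filter (fun z => sg T - vv z ∈ W) := by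
    intro i
    refine Finset.mem_filter.mpr ⟨hxT i, ?_⟩
    have hsum : sg (T.erase (x i)) = sg T - vv (x i) :=
      Finset.sum_erase_eq_sub (hxT i)
    have := (hcoX i).2
    rw [hxE i, hsum] at this
    exact this
  have hsubim : (Finset.univ : Finset (Fin m)).image x ⊆
      T.filter (fun z => sg T - vv z ∈ W) := by
    intro z hz
    obtain ⟨i, _, rfl⟩ := Finset.mem_image.mp hz
    exact hxmem i
  have hcount : m ≤ ycnt W T := by
    have h1 : ((Finset.univ : Finset (Fin m)).image x).card = m := by
      rw [Finset.card_image_of_injective _ hxinj, Finset.card_fin]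
    have h2 := Finset.card_le_card hsubim
    unfold ycnt
    omega
  have := hTY.2
  omega

lemma red {n m : ℕ} (hm : 3 ≤ m) (hmn : m ≤ n) (hn : 1000000000 ≤ n)
    (W : Finset (ZMod (n+m))) (hW : GoodW n m W) :
    ¬ ContainsWeakCopy n (n + m) ((BB m W)ᶜ) := by
  obtain ⟨hWc, hW2⟩ := hW
  rintro ⟨ψ, hinj, hmono' , hmono⟩
  have hnotB : ∀ A : Finset (Fin n), ψ A ∉ BB m W := fun A => hmono' A
  haveI : Nonempty (Fin (n+m)) := ⟨⟨0, by omega⟩⟩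
  have hchain := chain_card ψ hinj hmono
  have hlow : ∀ A : Finset (Fin n), m - 1 ≤ (ψ A).card := by
    intro A
    by_contra h
    exact hnotB A (Or.inl (Or.inl (show (ψ A).card ≤ m - 2 by omega)))
  have hcardA : ∀ A : Finset (Fin n), A.card ≤ n := by
    intro A
    have := Finset.card_le_card (Finset.subset_univ A)
    rwa [Finset.card_fin] at this
  have hup : ∀ A : Finset (Fin n), (ψ A).card ≤ m + A.card := by
    intro A
    have hc : (Finset.univ : Finset (Fin n)).card = A.card + (n - A.card) := by
      rw [Finset.card_fin]
      have := hcardA A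
      omega
    have h1 := hchain (n - A.card) A Finset.univ (Finset.subset_univ A) hc
    have h2 : (ψ Finset.univ).card ≤ n + m := by
      have := Finset.card_le_card (Finset.subset_univ (ψ Finset.univ))
      rwa [Finset.card_fin] at this
    have h3 := hcardA A
    omega
  set C := ψ ∅ with hC
  have hClow : m - 1 ≤ C.card := hlow ∅
  have hCup : C.card ≤ m := by
    have := hup ∅
    rwa [Finset.card_empty] at this
  have hCsub : ∀ a : Fin n, C ⊆ ψ {a} := fun a => hmono ∅ {a} (Finset.empty_subset _)
  have hsingle_low : ∀ a : Fin n, C.card + 1 ≤ (ψ {a}).card := by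
    intro a
    exact hchain 1 ∅ {a} (Finset.empty_subset _) (by simp)
  have hsingle_up : ∀ a : Fin n, (ψ {a}).card ≤ m + 1 := by
    intro a
    have := hup {a}
    rwa [Finset.card_singleton] at this
  have hnotY : ∀ (a : Fin n), (ψ {a}).card = m + 1 → m ≤ ycnt W (ψ {a}) := by
    intro a hcard
    have h1 := hnotB {a}
    have h2 : ψ {a} ∉ YY m W := fun h => h1 (Or.inr h)
    have h3 : ¬ ((ψ {a}).card = m + 1 ∧ ycnt W (ψ {a}) ≤ m - 1) := h2
    have h4 : ¬ (ycnt W (ψ {a}) ≤ m - 1) := fun h => h3 ⟨hcard, h⟩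
    omega
  -- a generic fact: ψ {a} = C ∪ (ψ {a} \ C)
  have hdecomp : ∀ a : Fin n, C ∪ (ψ {a} \ C) = ψ {a} :=
    fun a => Finset.union_sdiff_of_subset (hCsub a)
  have hsdcard : ∀ a : Fin n, (ψ {a} \ C).card = (ψ {a}).card - C.card :=
    fun a => Finset.card_sdiff_of_subset (hCsub a)
  rcases (show C.card = m - 1 ∨ C.card = m by omega) with hCm | hCm
  · -- C has m - 1 elements
    set T₁ := Finset.univ.filter (fun a : Fin n => (ψ {a}).card = m) with hT₁
    set T₂ := Finset.univ.filter (fun a : Fin n => ¬ (ψ {a}).card = m) with hT₂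
    have hsplit : T₁.card + T₂.card = n := by
      rw [hT₁, hT₂, Finset.card_filter_add_card_filter_not, Finset.card_fin]
    have hT₂card : ∀ a ∈ T₂, (ψ {a}).card = m + 1 := by
      intro a ha
      have h1 := (Finset.mem_filter.mp ha).2
      have h2 := hsingle_low a
      have h3 := hsingle_up a
      omega
    -- the extension set E
    set E := Finset.univ.filter (fun y => y ∉ C ∧ insert y C ∈ XX m W) with hE
    have hEcard : 41 ≤ E.card := ext_count hm hn W hWc C hCm
    -- T₁ bound
    have hT₁y : ∀ a ∈ T₁, ∃ y : Fin (n+m), y ∉ C ∧ ψ {a} = insert y C := by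
      intro a ha
      have hcard : (ψ {a} \ C).card = 1 := by
        rw [hsdcard a, (Finset.mem_filter.mp ha).2, hCm]
        omega
      obtain ⟨y, hy⟩ := Finset.card_eq_one.mp hcard
      have hyC : y ∉ C := by
        have : y ∈ ψ {a} \ C := by rw [hy]; exact Finset.mem_singleton_self y
        exact (Finset.mem_sdiff.mp this).2
      refine ⟨y, hyC, ?_⟩
      rw [← hdecomp a, hy, Finset.insert_eq, Finset.union_comm]
    have hT₁bound : T₁.card + 41 ≤ n + 1 := by
      have hEsub : E ⊆ Finset.univ \ C := by
        intro y hy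
        exact Finset.mem_sdiff.mpr ⟨Finset.mem_univ y, (Finset.mem_filter.mp hy).2.1⟩
      have hT₁y' : ∀ a : Fin n, ∃ y : Fin (n+m), a ∈ T₁ →
          (y ∉ C ∧ ψ {a} = insert y C) := by
        intro a
        by_cases ha : a ∈ T₁
        · obtain ⟨y, h1, h2⟩ := hT₁y a ha
          exact ⟨y, fun _ => ⟨h1, h2⟩⟩
        · exact ⟨Classical.arbitrary _, fun h => absurd h ha⟩
      choose yy hyy using hT₁y'
      have hmapsT₁ : ∀ a ∈ T₁, yy a ∈ (Finset.univ \ C) \ E := by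
        intro a ha
        refine Finset.mem_sdiff.mpr ⟨Finset.mem_sdiff.mpr
          ⟨Finset.mem_univ _, (hyy a ha).1⟩, ?_⟩
        intro hyE
        have h2 := (Finset.mem_filter.mp hyE).2.2
        rw [← (hyy a ha).2] at h2
        exact hnotB {a} (Or.inl (Or.inr h2))
      have hcard1 : T₁.card ≤ ((Finset.univ \ C) \ E).card := by
        refine Finset.card_le_card_of_injOn yy (fun a ha => hmapsT₁ a ha) ?_
        intro a ha b hb h
        simp only [Finset.mem_coe] at ha hb
        have h2 : ψ {a} = ψ {b} := by
          rw [(hyy a ha).2, (hyy b hb).2, h]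
        exact Finset.singleton_injective (hinj h2)
      have hcard2 : ((Finset.univ \ C) \ E).card + E.card = (Finset.univ \ C).card :=
        Finset.card_sdiff_add_card_eq_card hEsub
      have hcard3 : (Finset.univ \ C).card = n + 1 := by
        rw [Finset.card_sdiff_of_subset (Finset.subset_univ C), Finset.card_fin, hCm]
        omega
      omega
    -- T₂ bound
    have hT₂pair : ∀ a ∈ T₂, (ψ {a} \ C).card = 2 := by
      intro a ha
      rw [hsdcard a, hT₂card a ha, hCm]
      omega
    have hT₂bound : T₂.card ≤ 33 := by
      by_contra hbig
      push_neg at hbig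
      have hne : T₂.Nonempty := Finset.card_pos.mp (by omega)
      obtain ⟨a₀, ha₀⟩ := hne
      obtain ⟨u, w, huw, huweq⟩ := Finset.card_eq_two.mp (hT₂pair a₀ ha₀)
      have hmeet : ∀ a ∈ T₂, a ≠ a₀ → u ∈ ψ {a} \ C ∨ w ∈ ψ {a} \ C := by
        intro a ha hne'
        have hQup : (ψ (insert a₀ {a})).card ≤ m + 2 := by
          have := hup (insert a₀ {a})
          rw [Finset.card_insert_of_notMem (by
            simp only [Finset.mem_singleton]; exact fun h => hne' h.symm),
            Finset.card_singleton] at this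
          omega
        have hsub1 : ψ {a₀} ⊆ ψ (insert a₀ {a}) := by
          apply hmono
          intro z hz
          simp only [Finset.mem_singleton] at hz
          subst hz
          exact Finset.mem_insert_self _ _
        have hsub2 : ψ {a} ⊆ ψ (insert a₀ {a}) := by
          apply hmono
          intro z hz
          exact Finset.mem_insert_of_mem hz
        have hcup : C ∪ ((ψ {a₀} \ C) ∪ (ψ {a} \ C)) ⊆ ψ (insert a₀ {a}) := by
          intro z hz
          rcases Finset.mem_union.mp hz with hz | hz
          · exact hsub1 (hCsub a₀ hz)
          · rcases Finset.mem_union.mp hz with hz | hz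
            · exact hsub1 (Finset.mem_sdiff.mp hz).1
            · exact hsub2 (Finset.mem_sdiff.mp hz).1
        have hdisj : Disjoint C ((ψ {a₀} \ C) ∪ (ψ {a} \ C)) := by
          rw [Finset.disjoint_union_right]
          constructor <;> exact Finset.disjoint_sdiff
        have hcard4 : C.card + ((ψ {a₀} \ C) ∪ (ψ {a} \ C)).card ≤ m + 2 := by
          rw [← Finset.card_union_of_disjoint hdisj]
          exact le_trans (Finset.card_le_card hcup) hQup
        have hcard5 : ((ψ {a₀} \ C) ∪ (ψ {a} \ C)).card ≤ 3 := by omega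
        have hcard6 := Finset.card_union_add_card_inter (ψ {a₀} \ C) (ψ {a} \ C)
        have hcard7 : 1 ≤ ((ψ {a₀} \ C) ∩ (ψ {a} \ C)).card := by
          have h8 := hT₂pair a₀ ha₀
          have h9 := hT₂pair a ha
          omega
        obtain ⟨z, hz⟩ := Finset.card_pos.mp
          (show 0 < ((ψ {a₀} \ C) ∩ (ψ {a} \ C)).card by omega)
        obtain ⟨hz1, hz2⟩ := Finset.mem_inter.mp hz
        rw [huweq] at hz1
        rcases Finset.mem_insert.mp hz1 with h | h
        · left; rw [← h]; exact hz2
        · right; rw [← Finset.mem_singleton.mp h]; exact hz2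
      -- pigeonhole
      set T₂' := T₂.erase a₀ with hT₂'
      have hcover : T₂' ⊆ T₂'.filter (fun a => u ∈ ψ {a} \ C) ∪
          T₂'.filter (fun a => w ∈ ψ {a} \ C) := by
        intro a ha
        obtain ⟨hne', haT₂⟩ := Finset.mem_erase.mp ha
        rcases hmeet a haT₂ hne' with h | h
        · exact Finset.mem_union_left _ (Finset.mem_filter.mpr ⟨ha, h⟩)
        · exact Finset.mem_union_right _ (Finset.mem_filter.mpr ⟨ha, h⟩)
      have hT₂'card : 33 ≤ T₂'.card := by
        rw [hT₂', Finset.card_erase_of_mem ha₀]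
        omega
      have hbig2 : 17 ≤ (T₂'.filter (fun a => u ∈ ψ {a} \ C)).card ∨
          17 ≤ (T₂'.filter (fun a => w ∈ ψ {a} \ C)).card := by
        have h1 := Finset.card_le_card hcover
        have h2 := Finset.card_union_le (T₂'.filter (fun a => u ∈ ψ {a} \ C))
          (T₂'.filter (fun a => w ∈ ψ {a} \ C))
        omega
      -- extract the common point y₀ and the star
      have hstar : ∀ y₀ : Fin (n+m), y₀ ∉ C →
          (T₂'.filter (fun a => y₀ ∈ ψ {a} \ C)).card ≤ 16 := by
        intro y₀ hy₀C
        set G := T₂'.filter (fun a => y₀ ∈ ψ {a} \ C) with hG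
        set M' := insert y₀ C with hM'
        have hM'card : M'.card = m := by
          rw [hM', Finset.card_insert_of_notMem hy₀C, hCm]
          omega
        have hzex : ∀ a ∈ G, ∃ z : Fin (n+m), z ∉ M' ∧ ψ {a} = insert z M' := by
          intro a ha
          obtain ⟨haT₂', hy₀a⟩ := Finset.mem_filter.mp ha
          have haT₂ : a ∈ T₂ := (Finset.mem_erase.mp haT₂').2
          have hpe : ((ψ {a} \ C).erase y₀).card = 1 := by
            rw [Finset.card_erase_of_mem hy₀a, hT₂pair a haT₂]
          obtain ⟨z, hz⟩ := Finset.card_eq_one.mp hpe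
          have hzmem : z ∈ (ψ {a} \ C).erase y₀ := by
            rw [hz]; exact Finset.mem_singleton_self z
          have hzy₀ : z ≠ y₀ := (Finset.mem_erase.mp hzmem).1
          have hzsd : z ∈ ψ {a} \ C := (Finset.mem_erase.mp hzmem).2
          have hzC : z ∉ C := (Finset.mem_sdiff.mp hzsd).2
          have hpair : ψ {a} \ C = insert y₀ {z} := by
            rw [← Finset.insert_erase hy₀a, hz]
          refine ⟨z, ?_, ?_⟩
          · rw [hM']
            intro hmem2
            rcases Finset.mem_insert.mp hmem2 with h | h
            · exact hzy₀ h
            · exact hzC h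
          · rw [← hdecomp a, hpair, hM']
            ext t
            simp only [Finset.mem_union, Finset.mem_insert, Finset.mem_singleton]
            tauto
        have hzex' : ∀ a : Fin n, ∃ z : Fin (n+m), a ∈ G →
            (z ∉ M' ∧ ψ {a} = insert z M') := by
          intro a
          by_cases ha : a ∈ G
          · obtain ⟨z, h1, h2⟩ := hzex a ha
            exact ⟨z, fun _ => ⟨h1, h2⟩⟩
          · exact ⟨Classical.arbitrary _, fun h => absurd h ha⟩
        choose zz hzz using hzex'
        have hmapsG : ∀ a ∈ G, zz a ∈ Finset.univ.filter
              (fun y => y ∉ M' ∧ m ≤ ycnt W (insert y M')) := by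
          intro a ha
          refine Finset.mem_filter.mpr ⟨Finset.mem_univ _, (hzz a ha).1, ?_⟩
          have haT₂ : a ∈ T₂ := (Finset.mem_erase.mp (Finset.mem_filter.mp ha).1).2
          have hcard8 := hT₂card a haT₂
          have h9 := hnotY a hcard8
          rw [(hzz a ha).2] at h9
          exact h9
        have hcard9 : G.card ≤ (Finset.univ.filter
            (fun y => y ∉ M' ∧ m ≤ ycnt W (insert y M'))).card := by
          refine Finset.card_le_card_of_injOn zz (fun a ha => hmapsG a ha) ?_
          intro a ha b hb h
          simp only [Finset.mem_coe] at ha hb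
          have h2 : ψ {a} = ψ {b} := by
            rw [(hzz a ha).2, (hzz b hb).2, h]
          exact Finset.singleton_injective (hinj h2)
        have hbc := bad_count hm W hW2 M' hM'card
        omega
      have hunotC : u ∉ C := by
        have : u ∈ ψ {a₀} \ C := by rw [huweq]; exact Finset.mem_insert_self _ _
        exact (Finset.mem_sdiff.mp this).2
      have hwnotC : w ∉ C := by
        have : w ∈ ψ {a₀} \ C := by
          rw [huweq]; exact Finset.mem_insert_of_mem (Finset.mem_singleton_self w)
        exact (Finset.mem_sdiff.mp this).2
      rcases hbig2 with h | h
      · have := hstar u hunotC; omega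
      · have := hstar w hwnotC; omega
    omega
  · -- C has m elements
    have hPcard : ∀ a : Fin n, (ψ {a}).card = m + 1 := by
      intro a
      have h1 := hsingle_low a
      have h2 := hsingle_up a
      omega
    have hyex : ∀ a : Fin n, ∃ y : Fin (n+m), y ∉ C ∧ ψ {a} = insert y C := by
      intro a
      have hcard : (ψ {a} \ C).card = 1 := by
        rw [hsdcard a, hPcard a, hCm]
        omega
      obtain ⟨y, hy⟩ := Finset.card_eq_one.mp hcard
      have hyC : y ∉ C := by
        have : y ∈ ψ {a} \ C := by rw [hy]; exact Finset.mem_singleton_self y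
        exact (Finset.mem_sdiff.mp this).2
      refine ⟨y, hyC, ?_⟩
      rw [← hdecomp a, hy, Finset.insert_eq, Finset.union_comm]
    choose yy hyy using hyex
    have hmaps : ∀ a : Fin n, yy a ∈ Finset.univ.filter
        (fun y => y ∉ C ∧ m ≤ ycnt W (insert y C)) := by
      intro a
      refine Finset.mem_filter.mpr ⟨Finset.mem_univ _, (hyy a).1, ?_⟩
      have h9 := hnotY a (hPcard a)
      rw [(hyy a).2] at h9
      exact h9
    have hinjy : Function.Injective yy := by
      intro a b h
      have h2 : ψ {a} = ψ {b} := by rw [(hyy a).2, (hyy b).2, h]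
      exact Finset.singleton_injective (hinj h2)
    have hcard1 : n ≤ (Finset.univ.filter
        (fun y => y ∉ C ∧ m ≤ ycnt W (insert y C))).card := by
      have := Finset.card_le_card_of_injOn (s := (Finset.univ : Finset (Fin n))) yy
        (fun a _ => hmaps a) (fun a _ b _ h => hinjy h)
      rwa [Finset.card_fin] at this
    have hbc := bad_count hm W hW2 C hCm
    omega

lemma natCast_inj_of_lt {N x y : ℕ} (hx : x < N) (hy : y < N) (h : (x : ZMod N) = y) : x = y := by
  haveI : NeZero N := ⟨by omega⟩
  have := congrArg ZMod.val h
  rwa [ZMod.val_natCast_of_lt hx, ZMod.val_natCast_of_lt hy] at this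

/-- Erdős–Turán: the function `i ↦ i(2p+1) + (i² mod p)` is a Sidon set on `[0,K)`. -/
lemma ET {p : ℕ} (hp : p.Prime) (hp2 : 2 < p) {K : ℕ} (hK : 2 * K ≤ p)
    {a b c d : ℕ} (ha : a < K) (hb : b < K) (hc : c < K) (hd : d < K)
    (h : a * (2*p+1) + a*a % p + (b * (2*p+1) + b*b % p)
       = c * (2*p+1) + c*c % p + (d * (2*p+1) + d*d % p)) :
    (a = c ∧ b = d) ∨ (a = d ∧ b = c) := by
  haveI : Fact p.Prime := ⟨hp⟩
  have hppos : 0 < p := by omega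
  have hra : a*a % p < p := Nat.mod_lt _ hppos
  have hrb : b*b % p < p := Nat.mod_lt _ hppos
  have hrc : c*c % p < p := Nat.mod_lt _ hppos
  have hrd : d*d % p < p := Nat.mod_lt _ hppos
  -- regroup
  have h' : (a+b) * (2*p+1) + (a*a % p + b*b % p)
      = (c+d) * (2*p+1) + (c*c % p + d*d % p) := by
    rw [add_mul, add_mul]; linarith
  have hs1 : a*a % p + b*b % p < 2*p+1 := by omega
  have hs2 : c*c % p + d*d % p < 2*p+1 := by omega
  have hmod : a*a % p + b*b % p = c*c % p + d*d % p := by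
    have h'' : a*a % p + b*b % p + (a+b) * (2*p+1)
        = c*c % p + d*d % p + (c+d) * (2*p+1) := by linarith
    have h1 := congrArg (· % (2*p+1)) h''
    simpa [Nat.add_mul_mod_self_right, Nat.mod_eq_of_lt hs1, Nat.mod_eq_of_lt hs2] using h1
  have hsum : a + b = c + d := by
    have h2 : (a+b) * (2*p+1) = (c+d) * (2*p+1) := by omega
    exact Nat.eq_of_mul_eq_mul_right (by omega) h2
  -- pass to ZMod p
  have e2 : (a : ZMod p)^2 + (b : ZMod p)^2 = (c : ZMod p)^2 + (d : ZMod p)^2 := by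
    have := congrArg (fun t : ℕ => (t : ZMod p)) hmod
    push_cast [ZMod.natCast_mod] at this
    ring_nf at this ⊢
    convert this using 2 <;> ring
  have esum : (a : ZMod p) + b = (c : ZMod p) + d := by
    have := congrArg (fun t : ℕ => (t : ZMod p)) hsum
    push_cast at this
    exact this
  have e3 : ((a:ZMod p) - b)^2 = ((c:ZMod p) - d)^2 := by
    have key : ∀ x y : ZMod p, (x - y)^2 = 2*(x^2 + y^2) - (x+y)^2 := fun x y => by ring
    rw [key, key, e2, esum]
  have e4 : (((a:ZMod p) - b) - ((c:ZMod p) - d)) * (((a:ZMod p) - b) + ((c:ZMod p) - d)) = 0 := by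
    linear_combination e3
  rcases mul_eq_zero.mp e4 with h5 | h5
  · -- a - b = c - d  ⇒  a + d = c + b
    left
    have h6 : (a : ZMod p) + d = (c : ZMod p) + b := by linear_combination h5
    have h7 : ((a + d : ℕ) : ZMod p) = ((c + b : ℕ) : ZMod p) := by push_cast; linear_combination h6
    have h8 : a + d = c + b := natCast_inj_of_lt (by omega) (by omega) h7
    omega
  · -- a - b = d - c  ⇒  a + c = b + d
    right
    have h6 : (a : ZMod p) + c = (b : ZMod p) + d := by linear_combination h5
    have h7 : ((a + c : ℕ) : ZMod p) = ((b + d : ℕ) : ZMod p) := by push_cast; linear_combination h6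
    have h8 : a + c = b + d := natCast_inj_of_lt (by omega) (by omega) h7
    omega

def gad (p off i : ℕ) : ℕ := off + i * (2*p+1) + i*i % p

lemma gad_eq {p off : ℕ} (hp : p.Prime) (hp2 : 2 < p) {K : ℕ} (hK : 2*K ≤ p)
    {a b c d : ℕ} (ha : a < K) (hb : b < K) (hc : c < K) (hd : d < K)
    (h : gad p off a + gad p off b = gad p off c + gad p off d) :
    (a = c ∧ b = d) ∨ (a = d ∧ b = c) := by
  apply ET hp hp2 hK ha hb hc hd
  unfold gad at h
  linarith

lemma gad_inj {p off : ℕ} (hp : p.Prime) (hp2 : 2 < p) {K : ℕ} (hK : 2*K ≤ p)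
    {i j : ℕ} (hi : i < K) (hj : j < K) (h : gad p off i = gad p off j) : i = j := by
  have h0 : 0 < K := by omega
  have heq : gad p off i + gad p off 0 = gad p off j + gad p off 0 := by omega
  rcases gad_eq hp hp2 hK hi h0 hj h0 heq with ⟨h1, _⟩ | ⟨h1, h2⟩
  · exact h1
  · omega

lemma corr_le_shift_count {N L : ℕ} (hLN : L < N) (S : Finset ℕ)
    (hS : ∀ s ∈ S, s < L) (δ : ZMod N) :
    corr (S.image (fun s : ℕ => (s : ZMod N))) δ ≤
      (S.filter (fun b => (b + δ.val) % N ∈ S)).card := by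
  classical
  haveI : NeZero N := ⟨by omega⟩
  apply Finset.card_le_card_of_injOn (fun w => (w - δ).val)
  · intro w hw
    obtain ⟨hw1, hw2⟩ := Finset.mem_filter.mp hw
    obtain ⟨b, hbS, hb⟩ := Finset.mem_image.mp hw2
    obtain ⟨a, haS, ha⟩ := Finset.mem_image.mp hw1
    have hbval : (w - δ).val = b := by
      rw [← hb, ZMod.val_natCast_of_lt (lt_trans (hS b hbS) hLN)]
    refine Finset.mem_filter.mpr ⟨by show (w - δ).val ∈ S; rw [hbval]; exact hbS, ?_⟩
    show ((w - δ).val + δ.val) % N ∈ S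
    rw [hbval]
    have h2 : w = (b : ZMod N) + δ := by rw [hb]; ring
    have h3 : ((b + δ.val : ℕ) : ZMod N) = w := by
      push_cast
      rw [ZMod.natCast_val, ZMod.cast_id, h2]
    have h4 : w.val = a := by
      rw [← ha, ZMod.val_natCast_of_lt (lt_trans (hS a haS) hLN)]
    have h5 : ((b + δ.val : ℕ) : ZMod N).val = (b + δ.val) % N := ZMod.val_natCast N _
    rw [h3, h4] at h5
    rw [← h5]
    exact haS
  · intro w hw w' hw' h
    have h2 : w - δ = w' - δ := ZMod.val_injective _ h
    have := congrArg (· + δ) h2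
    simpa using this

lemma shift_count_le {L e : ℕ} (S : Finset ℕ) (hS : ∀ s ∈ S, s < L) :
    (S.filter (fun b => b + e ∈ S)).card + e ≤ L ∨ (S.filter (fun b => b + e ∈ S)).card = 0 := by
  classical
  rcases le_or_gt e L with he | he
  · left
    have hsub : S.filter (fun b => b + e ∈ S) ⊆ Finset.range (L - e) := by
      intro b hb
      obtain ⟨h1, h2⟩ := Finset.mem_filter.mp hb
      exact Finset.mem_range.mpr (by have := hS _ h2; omega)
    have := Finset.card_le_card hsub
    rw [Finset.card_range] at this
    omega
  · right
    rw [Finset.card_eq_zero, Finset.filter_eq_empty_iff]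
    intro b hb hmem
    have := hS _ hmem
    omega

lemma shift_count_punct {L e : ℕ} (P : Finset ℕ) (hL : 9100 ≤ L)
    (hPb : ∀ q ∈ P, 100 ≤ q ∧ q < 8980) (hPc : P.card = 46)
    (hPpair : (P.filter (fun q => q + e ∈ P)).card ≤ 1)
    (he1 : 1 ≤ e) (he2 : e ≤ 94) :
    ((Finset.range L \ P).filter (fun b => b + e ∈ Finset.range L \ P)).card + 91 + e ≤ L := by
  classical
  set Pm := P.image (fun q => q - e) with hPm
  have hsub : (Finset.range L \ P).filter (fun b => b + e ∈ Finset.range L \ P)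
      ⊆ Finset.range (L - e) \ (P ∪ Pm) := by
    intro b hb
    obtain ⟨hb1, hb2⟩ := Finset.mem_filter.mp hb
    obtain ⟨hbr, hbP⟩ := Finset.mem_sdiff.mp hb1
    obtain ⟨hbr2, hbP2⟩ := Finset.mem_sdiff.mp hb2
    have hblt := Finset.mem_range.mp hbr2
    refine Finset.mem_sdiff.mpr ⟨Finset.mem_range.mpr (by omega), ?_⟩
    intro hmem
    rcases Finset.mem_union.mp hmem with h | h
    · exact hbP h
    · obtain ⟨q, hq, hqe⟩ := Finset.mem_image.mp h
      have h100 := (hPb q hq).1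
      have hbq : b + e = q := by omega
      exact hbP2 (by rw [hbq]; exact hq)
  have hPmcard : Pm.card = 46 := by
    rw [hPm, Finset.card_image_of_injOn, hPc]
    intro x hx y hy h
    simp only [Finset.mem_coe] at hx hy
    have h' : x - e = y - e := h
    have h1 := (hPb x hx).1
    have h2 := (hPb y hy).1
    omega
  have hunion : (P ∪ Pm) ⊆ Finset.range (L - e) := by
    intro q hq
    rcases Finset.mem_union.mp hq with h | h
    · have := (hPb q h).2
      exact Finset.mem_range.mpr (by omega)
    · obtain ⟨q', hq', rfl⟩ := Finset.mem_image.mp h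
      have := (hPb q' hq').2
      exact Finset.mem_range.mpr (by omega)
  have hint : (P ∩ Pm).card ≤ 1 := by
    refine le_trans (Finset.card_le_card ?_) hPpair
    intro q hq
    obtain ⟨h1, h2⟩ := Finset.mem_inter.mp hq
    obtain ⟨q', hq', hqe⟩ := Finset.mem_image.mp h2
    have := (hPb q' hq').1
    have hqq : q + e = q' := by omega
    exact Finset.mem_filter.mpr ⟨h1, by rw [hqq]; exact hq'⟩
  have hucard : 91 ≤ (P ∪ Pm).card := by
    have := Finset.card_union_add_card_inter P Pm
    omega
  have h1 := Finset.card_le_card hsub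
  have h2 := Finset.card_sdiff_add_card_eq_card hunion
  rw [Finset.card_range] at h2
  omega

lemma sidon_corr {n m : ℕ} (hm : 3 ≤ m) (hmn : m ≤ n) (hn : 1000000000 ≤ n) (hms : m ≤ 10000)
    (δ : ZMod (n+m)) (hδ : δ ≠ 0) :
    corr ((Finset.range (m+40)).image (fun i => ((gad 20089 0 i : ℕ) : ZMod (n+m)))) δ ≤ 1 := by
  classical
  have hp : Nat.Prime 20089 := by norm_num
  have hgb : ∀ i, i < m + 40 → gad 20089 0 i < 403400000 := by
    intro i hi
    unfold gad
    have h1 : i * (2*20089+1) ≤ 10039 * (2*20089+1) := Nat.mul_le_mul_right _ (by omega)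
    have h2 : i*i % 20089 < 20089 := Nat.mod_lt _ (by norm_num)
    omega
  rw [corr]
  apply Finset.card_le_one.mpr
  intro w hw w' hw'
  obtain ⟨hw1, hw2⟩ := Finset.mem_filter.mp hw
  obtain ⟨a, ha, haeq⟩ := Finset.mem_image.mp hw1
  obtain ⟨b, hb, hbeq⟩ := Finset.mem_image.mp hw2
  obtain ⟨hw1', hw2'⟩ := Finset.mem_filter.mp hw'
  obtain ⟨c, hc, hceq⟩ := Finset.mem_image.mp hw1'
  obtain ⟨d, hd, hdeq⟩ := Finset.mem_image.mp hw2'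
  rw [Finset.mem_range] at ha hb hc hd
  have key : ((gad 20089 0 a + gad 20089 0 d : ℕ) : ZMod (n+m))
      = ((gad 20089 0 c + gad 20089 0 b : ℕ) : ZMod (n+m)) := by
    push_cast
    rw [haeq, hbeq, hceq, hdeq]
    ring
  have keyn : gad 20089 0 a + gad 20089 0 d = gad 20089 0 c + gad 20089 0 b := by
    refine natCast_inj_of_lt ?_ ?_ key
    · have := hgb a ha; have := hgb d hd; omega
    · have := hgb c hc; have := hgb b hb; omega
  rcases ET hp (by norm_num) (show 2*(m+40) ≤ 20089 by omega) ha hd hc hb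
      (by unfold gad at keyn; linarith) with ⟨h1, h2⟩ | ⟨h1, h2⟩
  · rw [← haeq, ← hceq, h1]
  · exfalso
    apply hδ
    have h3 : w - δ = w := by rw [← hbeq, ← haeq, h1]
    exact sub_eq_self.mp h3

lemma punct_pair {e : ℕ} (he : 1 ≤ e) :
    (((Finset.range 46).image (gad 97 100)).filter
      (fun q => q + e ∈ (Finset.range 46).image (gad 97 100))).card ≤ 1 := by
  classical
  have hp : Nat.Prime 97 := by norm_num
  apply Finset.card_le_one.mpr
  intro q₁ hq₁ q₂ hq₂
  obtain ⟨hq₁P, hq₁e⟩ := Finset.mem_filter.mp hq₁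
  obtain ⟨hq₂P, hq₂e⟩ := Finset.mem_filter.mp hq₂
  obtain ⟨j₁, hj₁, hj₁e⟩ := Finset.mem_image.mp hq₁P
  obtain ⟨j₂, hj₂, hj₂e⟩ := Finset.mem_image.mp hq₂P
  obtain ⟨j₁', hj₁', hj₁e'⟩ := Finset.mem_image.mp hq₁e
  obtain ⟨j₂', hj₂', hj₂e'⟩ := Finset.mem_image.mp hq₂e
  rw [Finset.mem_range] at hj₁ hj₂ hj₁' hj₂'
  have key : gad 97 100 j₁ + gad 97 100 j₂' = gad 97 100 j₂ + gad 97 100 j₁' := by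
    rw [hj₁e, hj₂e', hj₂e, hj₁e']
    omega
  rcases gad_eq hp (by norm_num) (show 2*46 ≤ 97 by norm_num) hj₁ hj₂' hj₂ hj₁' key with
    ⟨h1, h2⟩ | ⟨h1, h2⟩
  · rw [← hj₁e, ← hj₂e, h1]
  · exfalso
    have h3 : gad 97 100 j₁' = q₁ := by rw [← h1, hj₁e]
    omega

lemma val_pos_of_ne_zero {N : ℕ} [NeZero N] {δ : ZMod N} (hδ : δ ≠ 0) : 1 ≤ δ.val := by
  rcases Nat.eq_zero_or_pos δ.val with h | h
  · exact absurd ((ZMod.val_eq_zero δ).mp h) hδ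
  · exact h

lemma punct_corr {n m : ℕ} (hm : 10000 < m) (hmn : m ≤ n) (hn : 1000000000 ≤ n)
    (δ : ZMod (n+m)) (hδ : δ ≠ 0) :
    corr ((Finset.range (m+86) \ (Finset.range 46).image (gad 97 100)).image
      (fun s : ℕ => (s : ZMod (n+m)))) δ ≤ m - 4 := by
  classical
  haveI : NeZero (n+m) := ⟨by omega⟩
  set P := (Finset.range 46).image (gad 97 100) with hP
  set S := Finset.range (m+86) \ P with hS
  have hPb : ∀ q ∈ P, 100 ≤ q ∧ q < 8980 := by
    intro q hq
    obtain ⟨j, hj, rfl⟩ := Finset.mem_image.mp hq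
    rw [Finset.mem_range] at hj
    unfold gad
    have h2 : j*j % 97 < 97 := Nat.mod_lt _ (by norm_num)
    have h1 : j * (2*97+1) ≤ 45 * (2*97+1) := Nat.mul_le_mul_right _ (by omega)
    omega
  have hSL : ∀ s ∈ S, s < m + 86 := by
    intro s hs
    exact Finset.mem_range.mp (Finset.mem_sdiff.mp hs).1
  have hLN : m + 86 < n + m := by omega
  have hstep1 := corr_le_shift_count hLN S hSL δ
  set dv := δ.val with hdv
  have hdv1 : 1 ≤ dv := val_pos_of_ne_zero hδ
  have hdv2 : dv < n + m := ZMod.val_lt δ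
  set dv' := (n + m) - dv with hdv'
  have hsub : S.filter (fun b => (b + dv) % (n+m) ∈ S) ⊆
      (S.filter (fun b => b + dv ∈ S)) ∪
      ((S.filter (fun a => a + dv' ∈ S)).image (fun a => a + dv')) := by
    intro b hb
    obtain ⟨hbS, hbmod⟩ := Finset.mem_filter.mp hb
    rcases lt_or_ge (b + dv) (n+m) with hlt | hge
    · rw [Nat.mod_eq_of_lt hlt] at hbmod
      exact Finset.mem_union_left _ (Finset.mem_filter.mpr ⟨hbS, hbmod⟩)
    · have hblt := hSL b hbS
      have hmod : (b + dv) % (n+m) = b + dv - (n+m) := by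
        rw [Nat.mod_eq_sub_mod hge, Nat.mod_eq_of_lt (by omega)]
      rw [hmod] at hbmod
      refine Finset.mem_union_right _ (Finset.mem_image.mpr
        ⟨b + dv - (n+m), Finset.mem_filter.mpr ⟨hbmod, ?_⟩, by omega⟩)
      have : b + dv - (n+m) + dv' = b := by omega
      rw [this]
      exact hbS
  have hcardsub := Finset.card_le_card hsub
  have himg := Finset.card_image_le (s := S.filter (fun a => a + dv' ∈ S))
    (f := fun a => a + dv')
  have huni := Finset.card_union_le (S.filter (fun b => b + dv ∈ S))
    ((S.filter (fun a => a + dv' ∈ S)).image (fun a => a + dv'))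
  have hdv'1 : 1 ≤ dv' := by omega
  have hA := shift_count_le (L := m + 86) (e := dv) S hSL
  have hB := shift_count_le (L := m + 86) (e := dv') S hSL
  rcases le_or_gt dv 94 with h94 | h94
  · have hAp := shift_count_punct (L := m + 86) (e := dv) P (by omega) hPb
      (by rw [hP, Finset.card_image_of_injOn, Finset.card_range]
          intro i hi j hj h
          simp only [Finset.mem_coe, Finset.mem_range] at hi hj
          exact gad_inj (by norm_num) (by norm_num) (show 2*46 ≤ 97 by norm_num) hi hj h)
      (punct_pair hdv1) hdv1 h94
    rw [← hS] at hAp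
    omega
  · rcases le_or_gt dv' 94 with h94' | h94'
    · have hBp := shift_count_punct (L := m + 86) (e := dv') P (by omega) hPb
        (by rw [hP, Finset.card_image_of_injOn, Finset.card_range]
            intro i hi j hj h
            simp only [Finset.mem_coe, Finset.mem_range] at hi hj
            exact gad_inj (by norm_num) (by norm_num) (show 2*46 ≤ 97 by norm_num) hi hj h)
        (punct_pair hdv'1) hdv'1 h94'
      rw [← hS] at hBp
      omega
    · omega

lemma exists_W' (n m : ℕ) (hm : 3 ≤ m) (hmn : m ≤ n) (hn : 1000000000 ≤ n) :
    ∃ W : Finset (ZMod (n+m)), W.card = m + 40 ∧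
      ((∀ δ : ZMod (n+m), δ ≠ 0 → corr W δ ≤ m - 4) ∨
       (m ≤ 4 ∧ ∀ δ : ZMod (n+m), δ ≠ 0 → corr W δ ≤ 1)) := by
  classical
  rcases le_or_gt m 10000 with hms | hms
  · refine ⟨(Finset.range (m+40)).image (fun i => ((gad 20089 0 i : ℕ) : ZMod (n+m))), ?_, ?_⟩
    · rw [Finset.card_image_of_injOn, Finset.card_range]
      intro i hi j hj h
      simp only [Finset.mem_coe, Finset.mem_range] at hi hj
      have hgb : ∀ x, x < m + 40 → gad 20089 0 x < 403400000 := by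
        intro x hx
        unfold gad
        have h1 : x * (2*20089+1) ≤ 10039 * (2*20089+1) := Nat.mul_le_mul_right _ (by omega)
        have h2 : x*x % 20089 < 20089 := Nat.mod_lt _ (by norm_num)
        omega
      have heqn : gad 20089 0 i = gad 20089 0 j := by
        refine natCast_inj_of_lt ?_ ?_ h
        · have := hgb i hi; omega
        · have := hgb j hj; omega
      exact gad_inj (by norm_num) (by norm_num) (show 2*(m+40) ≤ 20089 by omega) hi hj heqn
    · rcases le_or_gt m 4 with h4 | h4
      · exact Or.inr ⟨h4, fun δ hδ => sidon_corr hm hmn hn hms δ hδ⟩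
      · exact Or.inl (fun δ hδ => le_trans (sidon_corr hm hmn hn hms δ hδ) (by omega))
  · refine ⟨(Finset.range (m+86) \ (Finset.range 46).image (gad 97 100)).image
      (fun s : ℕ => (s : ZMod (n+m))), ?_, Or.inl (fun δ hδ => punct_corr hms hmn hn δ hδ)⟩
    have hPb : ∀ q ∈ (Finset.range 46).image (gad 97 100), q < 8980 := by
      intro q hq
      obtain ⟨j, hj, rfl⟩ := Finset.mem_image.mp hq
      rw [Finset.mem_range] at hj
      unfold gad
      have h2 : j*j % 97 < 97 := Nat.mod_lt _ (by norm_num)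
      have h1 : j * (2*97+1) ≤ 45 * (2*97+1) := Nat.mul_le_mul_right _ (by omega)
      omega
    have hPsub : (Finset.range 46).image (gad 97 100) ⊆ Finset.range (m + 86) := by
      intro q hq
      exact Finset.mem_range.mpr (by have := hPb q hq; omega)
    have hPcard : ((Finset.range 46).image (gad 97 100)).card = 46 := by
      rw [Finset.card_image_of_injOn, Finset.card_range]
      intro i hi j hj h
      simp only [Finset.mem_coe, Finset.mem_range] at hi hj
      exact gad_inj (by norm_num) (by norm_num) (show 2*46 ≤ 97 by norm_num) hi hj h
    rw [Finset.card_image_of_injOn, Finset.card_sdiff_of_subset hPsub, Finset.card_range, hPcard]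
    · omega
    · intro i hi j hj h
      simp only [Finset.mem_coe, Finset.mem_sdiff, Finset.mem_range] at hi hj
      exact natCast_inj_of_lt (by omega) (by omega) h

lemma exists_W (n m : ℕ) (hm : 3 ≤ m) (hmn : m ≤ n) (hn : 1000000000 ≤ n) :
    ∃ W : Finset (ZMod (n+m)), GoodW n m W := by
  obtain ⟨W, h1, h2⟩ := exists_W' n m hm hmn hn
  exact ⟨W, h1, h2⟩

lemma main (n m : ℕ) (hm : 3 ≤ m) (hmn : m ≤ n) (hn : 1000000000 ≤ n) :
    ∃ B R : Set (Finset (Fin (n + m))),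
      B ∪ R = Set.univ ∧ B ∩ R = ∅ ∧
      ¬ ContainsWeakCopy m (n + m) B ∧ ¬ ContainsWeakCopy n (n + m) R := by
  obtain ⟨W, hW⟩ := exists_W n m hm hmn hn
  exact ⟨BB m W, (BB m W)ᶜ, Set.union_compl_self _, Set.inter_compl_self _,
    blue hm W, red hm hmn hn W hW⟩

end WRL

/-- There is `n₀` such that for all `n ≥ n₀` and `m ≥ 3` there is a partition of
`Q_{n+m}` into families `B` and `R` such that `B` contains no weak copy of `Q_m`
and `R` contains no weak copy of `Q_n`. -/
theorem weak_ramsey_lower_probabilistic :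
    ∃ n₀ : ℕ, ∀ n : ℕ, n₀ ≤ n → ∀ m : ℕ, 3 ≤ m →
      ∃ B R : Set (Finset (Fin (n + m))),
        B ∪ R = Set.univ ∧ B ∩ R = ∅ ∧
        ¬ ContainsWeakCopy m (n + m) B ∧ ¬ ContainsWeakCopy n (n + m) R := by
  refine ⟨1000000000, fun n hn m hm => ?_⟩
  rcases le_or_gt m n with h | h
  · exact WRL.main n m hm h hn
  · have h1 : n + m = m + n := Nat.add_comm n m
    rw [h1]
    obtain ⟨B, R, hu, hi, hB, hR⟩ :=
      WRL.main m n (by omega) h.le (le_trans hn h.le)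
    exact ⟨R, B, by rw [Set.union_comm]; exact hu, by rw [Set.inter_comm]; exact hi, hR, hB⟩
end

section
/- Let n ≥ 2. There is no family F of 2-element subsets of [n+2] with the following property: setting B = {∅} ∪ F ∪ {all 3-element subsets of [n+2]} and R = Q_{n+2} ∖ B, the family B contains no weak copy of Q_2 and the family R contains no weak copy of Q_n. That is, for every family F of 2-element subsets of [n+2], with B and R defined as above, either B contains a weak copy of Q_2 or R contains a weak copy of Q_n. -/
open Finset

section

variable {α : Type*} [DecidableEq α]

theorem subset_biUnion_iff_mem {ι : Type*} [Fintype ι] [DecidableEq ι] {f : ι → Finset α}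
    (hf : ∀ i, ¬ f i ⊆ (univ.erase i).biUnion f) {A : Finset ι} {i : ι} :
    f i ⊆ A.biUnion f ↔ i ∈ A := by
  refine ⟨fun hi => ?_, subset_biUnion_of_mem f⟩
  by_contra hiA
  exact hf i (hi.trans (biUnion_subset_biUnion_of_subset_left f fun j hj =>
    mem_erase.2 ⟨fun hji => hiA (hji ▸ hj), mem_univ j⟩))

theorem card_union_eq_three {S T : Finset α} (hS : #S = 2) (hT : #T = 2) (hST : S ≠ T)
    (hmeet : ¬ Disjoint S T) : #(S ∪ T) = 3 := by
  have hinter_pos : 0 < #(S ∩ T) := card_pos.2 (not_disjoint_iff_nonempty_inter.1 hmeet)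
  have hinter_lt : #(S ∩ T) < #S := by
    refine card_lt_card (ssubset_of_subset_of_ne inter_subset_left fun h => hST ?_)
    exact eq_of_subset_of_card_le (inter_eq_left.1 h) (by omega)
  have := card_union_add_card_inter S T
  omega

end

variable {N : ℕ}

theorem containsWeakCopy_of_biUnion {m : ℕ} {𝒢 : Set (Finset (Fin N))}
    (f : Fin m → Finset (Fin N)) (hf : ∀ i, ¬ f i ⊆ (univ.erase i).biUnion f)
    (h𝒢 : ∀ A : Finset (Fin m), A.biUnion f ∈ 𝒢) :
    ContainsWeakCopy m N 𝒢 := by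
  refine ⟨fun A => A.biUnion f, fun A B hAB => ?_, h𝒢,
    fun A B => biUnion_subset_biUnion_of_subset_left f⟩
  ext i
  rw [← subset_biUnion_iff_mem hf, ← subset_biUnion_iff_mem hf]
  exact Iff.of_eq (congrArg (f i ⊆ ·) hAB)

theorem containsWeakCopy_two_of_not_subset {𝒢 : Set (Finset (Fin N))} {S T : Finset (Fin N)}
    (hST : ¬ S ⊆ T) (hTS : ¬ T ⊆ S) (hempty : ∅ ∈ 𝒢) (hS : S ∈ 𝒢) (hT : T ∈ 𝒢)
    (hunion : S ∪ T ∈ 𝒢) :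
    ContainsWeakCopy 2 N 𝒢 := by
  refine containsWeakCopy_of_biUnion ![S, T] ?_ fun A => ?_
  · have h0 : univ.erase (0 : Fin 2) = {1} := by decide
    have h1 : univ.erase (1 : Fin 2) = {0} := by decide
    intro i
    fin_cases i <;> simpa [h0, h1]
  · have hA : A = ∅ ∨ A = {0} ∨ A = {1} ∨ A = {0, 1} := by revert A; decide
    rcases hA with rfl | rfl | rfl | rfl <;> simpa

section LiftSkippingThree

variable {n : ℕ} (g : Fin n ↪ Fin N) (s t : Fin N)

def liftSkippingThree (A : Finset (Fin n)) : Finset (Fin N) :=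
  A.map g ∪ if 2 ≤ #A then {s, t} else {s}

variable {g s t}

theorem mem_liftSkippingThree_iff (hs : ∀ i, g i ≠ s) (ht : ∀ i, g i ≠ t) {A : Finset (Fin n)}
    {i : Fin n} : g i ∈ liftSkippingThree g s t A ↔ i ∈ A := by
  unfold liftSkippingThree
  split_ifs <;> simp [hs i, ht i]

theorem liftSkippingThree_injective (hs : ∀ i, g i ≠ s) (ht : ∀ i, g i ≠ t) :
    Function.Injective (liftSkippingThree g s t) := fun A B hAB => by
  ext i
  rw [← mem_liftSkippingThree_iff hs ht, hAB, mem_liftSkippingThree_iff hs ht]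

theorem liftSkippingThree_mono {A B : Finset (Fin n)} (hAB : A ⊆ B) :
    liftSkippingThree g s t A ⊆ liftSkippingThree g s t B := by
  refine union_subset_union (map_subset_map.2 hAB) ?_
  split_ifs with hA hB hB
  · exact subset_rfl
  · exact absurd (hA.trans (card_le_card hAB)) hB
  · simp
  · exact subset_rfl

theorem card_liftSkippingThree (hst : s ≠ t) (hs : ∀ i, g i ≠ s) (ht : ∀ i, g i ≠ t)
    (A : Finset (Fin n)) : #(liftSkippingThree g s t A) = #A + if 2 ≤ #A then 2 else 1 := by
  unfold liftSkippingThree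
  rw [card_union_of_disjoint, card_map]
  · split_ifs <;> simp [hst]
  · split_ifs <;> simp [hs, ht]

end LiftSkippingThree

theorem containsWeakCopy_compl_of_forall_mem_imp_mem {n : ℕ} {F : Set (Finset (Fin (n + 2)))}
    (hF : ∀ S ∈ F, #S = 2) {s t : Fin (n + 2)} (hst : s ≠ t) (hpair : ∀ S ∈ F, s ∈ S → t ∈ S) :
    ContainsWeakCopy n (n + 2) ({∅} ∪ F ∪ {S | #S = 3})ᶜ := by
  obtain ⟨t', rfl⟩ := Fin.exists_succAbove_eq hst.symm
  set g : Fin n ↪ Fin (n + 2) := t'.succAboveEmb.trans s.succAboveEmb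
  have hs : ∀ i, g i ≠ s := fun i => s.succAbove_ne _
  have ht : ∀ i, g i ≠ s.succAbove t' := fun i => by simp [g]
  refine ⟨liftSkippingThree g s (s.succAbove t'), liftSkippingThree_injective hs ht, fun A => ?_,
    fun A B => liftSkippingThree_mono⟩
  have hcard := card_liftSkippingThree hst hs ht A
  have hs_mem : s ∈ liftSkippingThree g s (s.succAbove t') A := by
    unfold liftSkippingThree; split_ifs <;> simp
  simp only [Set.mem_compl_iff, Set.mem_union, Set.mem_singleton_iff, Set.mem_ofPred_eq, not_or]
  refine ⟨⟨ne_empty_of_mem hs_mem, fun hmem => ?_⟩, by split_ifs at hcard <;> omega⟩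
  have hA : ¬ 2 ≤ #A := by have := hF _ hmem; split_ifs at hcard <;> omega
  have ht_mem := hpair _ hmem hs_mem
  simp [liftSkippingThree, hA, ht, hst.symm] at ht_mem

theorem exists_ne_forall_mem_imp_mem {α : Type*} [Nontrivial α] {F : Set (Finset α)}
    (hF : ∀ S ∈ F, #S = 2) (hdisj : F.Pairwise Disjoint) :
    ∃ s t : α, s ≠ t ∧ ∀ S ∈ F, s ∈ S → t ∈ S := by
  rcases F.eq_empty_or_nonempty with rfl | ⟨P, hP⟩
  · obtain ⟨s, t, hst⟩ := exists_pair_ne α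
    exact ⟨s, t, hst, by simp⟩
  classical
  obtain ⟨s, t, hst, rfl⟩ := card_eq_two.1 (hF P hP)
  refine ⟨s, t, hst, fun S hS hsS => ?_⟩
  by_cases hSP : S = {s, t}
  · simp [hSP]
  · exact absurd (mem_insert_self s {t}) (disjoint_left.1 (hdisj hS hP hSP) hsS)

theorem cox_stolee_fails_for_m_two_general (n : ℕ)
    (F : Set (Finset (Fin (n + 2)))) (hF : ∀ S ∈ F, S.card = 2) :
    ContainsWeakCopy 2 (n + 2)
      ({(∅ : Finset (Fin (n + 2)))} ∪ F ∪ {S : Finset (Fin (n + 2)) | S.card = 3}) ∨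
    ContainsWeakCopy n (n + 2)
      ({(∅ : Finset (Fin (n + 2)))} ∪ F ∪ {S : Finset (Fin (n + 2)) | S.card = 3})ᶜ := by
  by_cases hmatch : F.Pairwise Disjoint
  · obtain ⟨s, t, hst, hpair⟩ := exists_ne_forall_mem_imp_mem hF hmatch
    exact Or.inr (containsWeakCopy_compl_of_forall_mem_imp_mem hF hst hpair)
  obtain ⟨S, hS, T, hT, hST, hmeet⟩ : ∃ S ∈ F, ∃ T ∈ F, S ≠ T ∧ ¬ Disjoint S T := by
    simpa [Set.Pairwise] using hmatch
  have not_subset {X Y} (hX : X ∈ F) (hY : Y ∈ F) (hXY : X ≠ Y) : ¬ X ⊆ Y := fun h =>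
    hXY (eq_of_subset_of_card_le h (by rw [hF X hX, hF Y hY]))
  refine Or.inl (containsWeakCopy_two_of_not_subset (not_subset hS hT hST)
    (not_subset hT hS hST.symm) (by simp) (by simp [hS]) (by simp [hT]) ?_)
  simp [card_union_eq_three (hF S hS) (hF T hT) hST hmeet]

/-- Claim 12 of the paper: for `n ≥ 2` and any family `F` of `2`-element subsets of
`[n+2]`, setting `B = {∅} ∪ F ∪ {3-element subsets}` and `R = Q_{n+2} ∖ B`, either
`B` contains a weak copy of `Q_2` or `R` contains a weak copy of `Q_n`. -/
theorem cox_stolee_fails_for_m_two (n : ℕ) (hn : 2 ≤ n)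
    (F : Set (Finset (Fin (n + 2)))) (hF : ∀ S ∈ F, S.card = 2) :
    ContainsWeakCopy 2 (n + 2)
      ({(∅ : Finset (Fin (n + 2)))} ∪ F ∪ {S : Finset (Fin (n + 2)) | S.card = 3}) ∨
    ContainsWeakCopy n (n + 2)
      ({(∅ : Finset (Fin (n + 2)))} ∪ F ∪ {S : Finset (Fin (n + 2)) | S.card = 3})ᶜ :=
  cox_stolee_fails_for_m_two_general n F hF
end

section
/- Let m, n ≥ 1 and let S ⊆ {0, 1, …, m+n−1} be any set of sizes with |S| = m. Color a subset X of [m+n−1] blue if |X| ∈ S and red otherwise. Then the family of blue sets contains no weak copy of Q_m and the family of red sets contains no weak copy of Q_n. Consequently, R_w(Q_m, Q_n) ≥ m + n. -/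
/-!
The initial segments `∅ ⊂ {0} ⊂ {0, 1} ⊂ ⋯ ⊂ [k]` form a chain of `k + 1` sets in `Q_k`.
A weak copy maps it to a strict chain (by injectivity), whose sets have `k + 1` distinct
sizes. A family whose sets take at most `k` sizes therefore contains no weak copy of `Q_k`.
The blue family takes the `m` sizes in `S`, the red one the `n` sizes in `{0, …, m+n−1} \ S`.
-/

def initialSegment (k : ℕ) (i : Fin (k + 1)) : Finset (Fin k) :=
  {x | x.castSucc < i}

lemma initialSegment_strictMono (k : ℕ) : StrictMono (initialSegment k) := by
  intro i j hij
  refine (Finset.ssubset_iff_of_subset fun x hx => ?_).2 ⟨⟨i, by omega⟩, ?_, ?_⟩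
  all_goals simp only [initialSegment, Finset.mem_filter, Finset.mem_univ, true_and,
    Fin.lt_def, Fin.val_castSucc] at *
  all_goals omega

lemma ContainsWeakCopy.lt_card_of_card_mem {k N : ℕ} {F : Set (Finset (Fin N))}
    {T : Finset ℕ} (hcopy : ContainsWeakCopy k N F) (hF : ∀ X ∈ F, X.card ∈ T) :
    k < T.card := by
  obtain ⟨φ, hinj, hmem, hmono⟩ := hcopy
  have hseg := initialSegment_strictMono k
  have hchain : StrictMono fun i => (φ (initialSegment k i)).card :=
    Finset.card_strictMono.comp <|
      (Monotone.comp (fun _ _ => hmono _ _) hseg.monotone).strictMono_of_injective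
        (hinj.comp hseg.injective)
  simpa using Finset.card_le_card_of_injOn (s := Finset.univ) _
    (fun i _ => hF _ (hmem _)) hchain.injective.injOn

theorem layered_coloring_weak_lower_general (m n : ℕ) (hm : 1 ≤ m)
    (S : Finset ℕ) (hS : S ⊆ Finset.range (m + n)) (hcard : S.card = m) :
    ¬ ContainsWeakCopy m (m + n - 1)
        {X : Finset (Fin (m + n - 1)) | X.card ∈ S} ∧
    ¬ ContainsWeakCopy n (m + n - 1)
        {X : Finset (Fin (m + n - 1)) | X.card ∉ S} := by
  have hsizes (X : Finset (Fin (m + n - 1))) : X.card ∈ Finset.range (m + n) := by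
    have := X.card_le_univ
    simp only [Fintype.card_fin, Finset.mem_range] at this ⊢
    omega
  refine ⟨fun hblue => ?_, fun hred => ?_⟩
  · exact (hblue.lt_card_of_card_mem fun _ hX => hX).ne' hcard
  · have := hred.lt_card_of_card_mem (T := Finset.range (m + n) \ S)
      fun X hX => Finset.mem_sdiff.2 ⟨hsizes X, hX⟩
    rw [Finset.card_sdiff_of_subset hS, Finset.card_range, hcard] at this
    omega

/-- The layered coloring: for `m, n ≥ 1` and any set `S ⊆ {0, 1, …, m+n−1}` of sizes
with `|S| = m`, coloring a subset `X ⊆ [m+n−1]` blue when `|X| ∈ S` and red otherwise,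
the blue family contains no weak copy of `Q_m` and the red family contains no weak
copy of `Q_n`; hence `R_w(Q_m, Q_n) ≥ m + n`. -/
theorem layered_coloring_weak_lower (m n : ℕ) (hm : 1 ≤ m) (hn : 1 ≤ n)
    (S : Finset ℕ) (hS : S ⊆ Finset.range (m + n)) (hcard : S.card = m) :
    ¬ ContainsWeakCopy m (m + n - 1)
        {X : Finset (Fin (m + n - 1)) | X.card ∈ S} ∧
    ¬ ContainsWeakCopy n (m + n - 1)
        {X : Finset (Fin (m + n - 1)) | X.card ∉ S} :=
  layered_coloring_weak_lower_general m n hm S hS hcard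
end
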